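/- arXiv:1412.7020 — 10 statements merged into one kernel-verified Lean document; each statement's English description precedes it below -/
import Mathlib

section
/- Let D be a finite non-abelian p-group with D/⟨z⟩ abelian of rank 2 for some z ∈ Z(D). Then every p'-automorphism α of D centralizing z acts freely on D/⟨z⟩, i.e., the only coset of ⟨z⟩ fixed by the induced automorphism on D/⟨z⟩ is the trivial one, unless α = 1. -/
/-!
Let `Q = D/⟨z⟩` and let `β` be the automorphism of `Q` induced by `α`. Since the order of `β`
is prime to `p`, `Q` is the direct product of `C_Q(β)` and `[Q, β]`, the kernel and the image
of `x ↦ β x / x`: if `x = β y / y` is fixed by `β`, then `β^i y = y x^i`, so the order of `x`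
divides that of `β`, hence `x = 1`. A fixed nontrivial coset makes `C_Q(β)` nontrivial, and
the same argument in `D` shows that `β = 1` would force `α = 1`. As `Ω₁(Q)` has at most
`p ^ rank Q = p²` elements, both factors are then cyclic. Preimages of a cyclic subgroup of `Q`
commute because `⟨z⟩` is central, and a preimage `c` of an element of `C_Q(β)` commutes with
every `α y * y⁻¹` since `⁅c, α y⁆ = ⁅α c, α y⁆ = α ⁅c, y⁆ = ⁅c, y⁆`. Hence `D` is abelian.
-/

open Subgroup commutatorElement

theorem MulEquiv.pow_eq_one_of_apply_eq_mul {G : Type*} [Group G] (β : G ≃* G) {n : ℕ}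
    (hn : β ^ n = 1) {x y : G} (hy : β y = y * x) (hx : β x = x) : x ^ n = 1 := by
  have hiter : ∀ i : ℕ, (β ^ i) y = y * x ^ i := by
    intro i
    induction i with
    | zero => simp
    | succ i ih =>
      rw [pow_succ', MulAut.mul_apply, ih, map_mul, map_pow, hy, hx, mul_assoc, ← pow_succ']
  simpa [hn] using hiter n

theorem IsPGroup.eq_one_of_pow_eq_one_of_coprime {p : ℕ} {G : Type*} [Group G]
    (hG : IsPGroup p G) {n : ℕ} (hn : n.Coprime p) {x : G} (hx : x ^ n = 1) : x = 1 := by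
  obtain ⟨k, hk⟩ := hG x
  exact (pow_eq_one_iff_of_coprime (hn.pow_right k)).mp ⟨hx, hk⟩

theorem IsPGroup.mulAut_eq_one_of_fixes_ker_of_fixes_quotient {p : ℕ} {G H : Type*} [Group G]
    [Group H] (hG : IsPGroup p G) (α : G ≃* G) (hα : (orderOf α).Coprime p) (f : G →* H)
    (hker : ∀ x ∈ f.ker, α x = x) (hquot : ∀ x, f (α x) = f x) : α = 1 := by
  ext x
  have hζ : x⁻¹ * α x ∈ f.ker := by simp [hquot]
  have hζn := α.pow_eq_one_of_apply_eq_mul (pow_orderOf_eq_one α)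
    (mul_inv_cancel_left x (α x)).symm (hker _ hζ)
  exact (inv_mul_eq_one.mp (hG.eq_one_of_pow_eq_one_of_coprime hα hζn)).symm

theorem MulEquiv.pow_eq_one_of_semiconj {G H : Type*} [Group G] [Group H] (f : G →* H)
    (hf : Function.Surjective f) (α : G ≃* G) (β : H ≃* H) (hαβ : ∀ x, f (α x) = β (f x))
    {n : ℕ} (hn : α ^ n = 1) : β ^ n = 1 := by
  have hiter : ∀ i : ℕ, ∀ x, (β ^ i) (f x) = f ((α ^ i) x) := by
    intro i
    induction i with
    | zero => simp
    | succ i ih =>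
      intro x
      rw [pow_succ', MulAut.mul_apply, ih, ← hαβ, pow_succ', MulAut.mul_apply]
  ext y
  obtain ⟨x, rfl⟩ := hf y
  rw [hiter, hn, MulAut.one_apply, MulAut.one_apply]

section CoprimeAction

variable {A : Type*} [CommGroup A] (β : A ≃* A)

/-- Its kernel is `C_A(β)` and its range is `[A, β]`. -/
def MulEquiv.commutatorMap : A →* A := (β : A →* A) / MonoidHom.id A

variable {β}

@[simp]
theorem MulEquiv.commutatorMap_apply (x : A) : β.commutatorMap x = β x / x := rfl

theorem MulEquiv.mem_ker_commutatorMap {x : A} : x ∈ β.commutatorMap.ker ↔ β x = x := by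
  simp [div_eq_one]

theorem MulEquiv.disjoint_ker_range_commutatorMap {p n : ℕ} (hA : IsPGroup p A)
    (hn : β ^ n = 1) (hnp : n.Coprime p) :
    Disjoint β.commutatorMap.ker β.commutatorMap.range := by
  rw [disjoint_def]
  rintro _ hfix ⟨y, rfl⟩
  rw [mem_ker_commutatorMap] at hfix
  exact hA.eq_one_of_pow_eq_one_of_coprime hnp
    (β.pow_eq_one_of_apply_eq_mul hn (y := y) (by simp) hfix)

theorem MulEquiv.isComplement'_ker_range_commutatorMap [Finite A] {p n : ℕ}
    (hA : IsPGroup p A) (hn : β ^ n = 1) (hnp : n.Coprime p) :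
    IsComplement' β.commutatorMap.ker β.commutatorMap.range := by
  refine isComplement'_of_card_mul_and_disjoint ?_ (disjoint_ker_range_commutatorMap hA hn hnp)
  rw [← index_ker, card_mul_index]

end CoprimeAction

theorem Subgroup.card_comap_le {G H : Type*} [Group G] [Group H] [Finite G] [Finite H]
    (f : G →* H) (K : Subgroup H) : Nat.card (K.comap f) ≤ Nat.card f.ker * Nat.card K := by
  let g := f.subgroupComap K
  have hker : Nat.card g.ker ≤ Nat.card f.ker :=
    Nat.card_le_card_of_injective (fun x => ⟨x.1.1, congrArg Subtype.val x.2⟩)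
      fun x y h => Subtype.ext <| Subtype.ext <| congrArg (fun u : f.ker => (u : G)) h
  calc Nat.card (K.comap f) = Nat.card g.ker * Nat.card g.range := by
        rw [← index_ker, card_mul_index]
    _ ≤ Nat.card f.ker * Nat.card K := Nat.mul_le_mul hker (card_le_card_group _)

section PowerMaps

variable {A : Type*} [CommGroup A]

theorem card_ker_powMonoidHom_mul_le [Finite A] (m n : ℕ) :
    Nat.card (powMonoidHom (m * n) : A →* A).ker ≤
      Nat.card (powMonoidHom m : A →* A).ker * Nat.card (powMonoidHom n : A →* A).ker := by
  have h : (powMonoidHom (m * n) : A →* A).ker =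
      (powMonoidHom n : A →* A).ker.comap (powMonoidHom m) := by
    ext x
    simp [pow_mul]
  rw [h]
  exact card_comap_le _ _

theorem card_ker_powMonoidHom_pow_le [Finite A] {p : ℕ}
    (h : Nat.card (powMonoidHom p : A →* A).ker ≤ p) (k : ℕ) :
    Nat.card (powMonoidHom (p ^ k) : A →* A).ker ≤ p ^ k := by
  induction k with
  | zero => simp [MonoidHom.ker]
  | succ k ih =>
    calc Nat.card (powMonoidHom (p ^ (k + 1)) : A →* A).ker
        ≤ Nat.card (powMonoidHom (p ^ k) : A →* A).ker *
            Nat.card (powMonoidHom p : A →* A).ker := by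
          rw [pow_succ]
          exact card_ker_powMonoidHom_mul_le _ _
      _ ≤ p ^ k * p := Nat.mul_le_mul ih h
      _ = p ^ (k + 1) := (pow_succ p k).symm

theorem IsPGroup.isCyclic_of_card_ker_powMonoidHom_le [Finite A] {p : ℕ} [Fact p.Prime]
    (hA : IsPGroup p A) (h : Nat.card (powMonoidHom p : A →* A).ker ≤ p) : IsCyclic A := by
  -- An element of maximal order `p ^ k = exponent A` generates, as `A = ker (· ^ p ^ k)`.
  obtain ⟨g, hg⟩ := Monoid.exists_orderOf_eq_exponent
    (Monoid.exponent_ne_zero.mp (Monoid.exponent_ne_zero_of_finite (G := A)))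
  obtain ⟨k, hk⟩ := IsPGroup.iff_orderOf.mp hA g
  have htop : (powMonoidHom (p ^ k) : A →* A).ker = ⊤ := by
    ext x
    simp [← hk, hg, Monoid.pow_exponent_eq_one]
  refine isCyclic_of_card_le_orderOf g ?_
  rw [← card_top (G := A), ← htop, hk]
  exact card_ker_powMonoidHom_pow_le h k

theorem index_range_powMonoidHom_le_pow_rank [Group.FG A] {n : ℕ} (hn : 0 < n) :
    (powMonoidHom n : A →* A).range.index ≤ n ^ Group.rank A := by
  classical
  obtain ⟨S, hScard, hS⟩ := Group.rank_spec A
  set P := (powMonoidHom n : A →* A).range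
  have hpow : ∀ x : A, (x : A ⧸ P) ^ n = 1 := fun x =>
    (QuotientGroup.eq_one_iff _).mpr ⟨x, rfl⟩
  have hsurj : Function.Surjective fun k : ↥(S : Set A) → Fin n =>
      (((∏ s : ↥(S : Set A), (s : A) ^ (k s : ℕ) : A)) : A ⧸ P) := by
    intro y
    obtain ⟨x, rfl⟩ := QuotientGroup.mk_surjective y
    obtain ⟨a, rfl⟩ :=
      mem_closure_iff_of_fintype.mp (hS ▸ mem_top x : x ∈ closure (S : Set A))
    have hlt : ∀ s, (a s % n).toNat < n := fun s => by
      have := Int.emod_lt_of_pos (a s) (by omega : (0 : ℤ) < n)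
      omega
    refine ⟨fun s => ⟨(a s % n).toNat, hlt s⟩, ?_⟩
    simp only [QuotientGroup.mk_prod, QuotientGroup.mk_pow, QuotientGroup.mk_zpow]
    refine Finset.prod_congr rfl fun s _ => ?_
    rw [zpow_eq_zpow_emod' (a s) (hpow s), ← zpow_natCast,
      Int.toNat_of_nonneg (Int.emod_nonneg _ (by omega))]
  calc P.index = Nat.card (A ⧸ P) := rfl
    _ ≤ Nat.card (↥(S : Set A) → Fin n) := Nat.card_le_card_of_surjective _ hsurj
    _ = n ^ Group.rank A := by simp [hScard]

theorem card_ker_powMonoidHom_le_pow_rank [Finite A] {n : ℕ} (hn : 0 < n) :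
    Nat.card (powMonoidHom n : A →* A).ker ≤ n ^ Group.rank A := by
  rw [← index_range]
  exact index_range_powMonoidHom_le_pow_rank hn

theorem card_ker_powMonoidHom_mul_card_le_of_disjoint [Finite A] {H K : Subgroup A}
    (hHK : Disjoint H K) (n : ℕ) :
    Nat.card (powMonoidHom n : H →* H).ker * Nat.card (powMonoidHom n : K →* K).ker ≤
      Nat.card (powMonoidHom n : A →* A).ker := by
  rw [← Nat.card_prod]
  refine Nat.card_le_card_of_injective (fun x => ⟨(x.1 : H) * (x.2 : K), ?_⟩) ?_
  · have h₁ : ((x.1 : H) : A) ^ n = 1 := by simpa using congrArg Subtype.val x.1.2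
    have h₂ : ((x.2 : K) : A) ^ n = 1 := by simpa using congrArg Subtype.val x.2.2
    simp [mul_pow, h₁, h₂]
  · intro x y h
    have := mul_injective_of_disjoint hHK (a₁ := ((x.1 : H), (x.2 : K)))
      (a₂ := ((y.1 : H), (y.2 : K))) (congrArg Subtype.val h)
    simp only [Prod.mk.injEq] at this
    exact Prod.ext (Subtype.ext this.1) (Subtype.ext this.2)

theorem IsPGroup.le_card_ker_powMonoidHom [Finite A] [Nontrivial A] {p : ℕ} [Fact p.Prime]
    (hA : IsPGroup p A) : p ≤ Nat.card (powMonoidHom p : A →* A).ker := by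
  have hdvd : p ∣ Nat.card A := (hA.card_eq_or_dvd).resolve_left Finite.one_lt_card.ne'
  obtain ⟨g, hg⟩ := exists_prime_orderOf_dvd_card' p hdvd
  have hle : zpowers g ≤ (powMonoidHom p : A →* A).ker := by
    rw [zpowers_le, MonoidHom.mem_ker, powMonoidHom_apply, ← hg, pow_orderOf_eq_one]
  calc p = Nat.card (zpowers g) := by rw [Nat.card_zpowers, hg]
    _ ≤ _ := card_le_of_le hle

theorem IsPGroup.isCyclic_of_disjoint_of_rank_le_two [Finite A] {p : ℕ} [Fact p.Prime]
    (hA : IsPGroup p A) (hrank : Group.rank A ≤ 2) {H K : Subgroup A} (hHK : Disjoint H K)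
    (hK : K ≠ ⊥) : IsCyclic H := by
  have : Nontrivial K := (nontrivial_iff_ne_bot K).mpr hK
  have hp : 0 < p := (Fact.out : p.Prime).pos
  have hKp := (hA.to_subgroup K).le_card_ker_powMonoidHom
  refine (hA.to_subgroup H).isCyclic_of_card_ker_powMonoidHom_le
    (Nat.le_of_mul_le_mul_right ?_ hp)
  calc _ ≤ Nat.card (powMonoidHom p : H →* H).ker * Nat.card (powMonoidHom p : K →* K).ker :=
        Nat.mul_le_mul_left _ hKp
    _ ≤ Nat.card (powMonoidHom p : A →* A).ker :=
        card_ker_powMonoidHom_mul_card_le_of_disjoint hHK p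
    _ ≤ p ^ Group.rank A := card_ker_powMonoidHom_le_pow_rank hp
    _ ≤ p ^ 2 := Nat.pow_le_pow_right hp hrank
    _ = p * p := sq p

end PowerMaps

theorem commute_apply_mul_inv {G : Type*} [Group G] (α : G ≃* G) {c y : G}
    (hc : c⁻¹ * α c ∈ center G) (hcy : ⁅c, y⁆ ∈ center G) (hfix : α ⁅c, y⁆ = ⁅c, y⁆) :
    Commute c (α y * y⁻¹) := by
  obtain ⟨ζ, hζ, hαc⟩ : ∃ ζ ∈ center G, α c = c * ζ :=
    ⟨_, hc, (mul_inv_cancel_left c _).symm⟩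
  have hαcy : ⁅c, α y⁆ = ⁅c, y⁆ := by
    rw [← hfix, map_commutatorElement, hαc, commutatorElement_def, commutatorElement_def]
    calc c * α y * c⁻¹ * (α y)⁻¹ = c * (α y * ζ) * ζ⁻¹ * c⁻¹ * (α y)⁻¹ := by group
      _ = c * ζ * α y * (c * ζ)⁻¹ * (α y)⁻¹ := by rw [mem_center_iff.mp hζ]; group
  have h₁ : c * α y = ⁅c, y⁆ * α y * c := by rw [← hαcy, commutatorElement_def]; group
  have h₂ : c * y⁻¹ = y⁻¹ * ⁅c, y⁆⁻¹ * c := by rw [commutatorElement_def]; group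
  calc c * (α y * y⁻¹) = ⁅c, y⁆ * α y * (c * y⁻¹) := by rw [← mul_assoc, h₁]; group
    _ = ⁅c, y⁆ * (α y * y⁻¹) * ⁅c, y⁆⁻¹ * c := by rw [h₂]; group
    _ = α y * y⁻¹ * c := by rw [← mem_center_iff.mp hcy]; group

theorem commute_of_map_mem_of_isCyclic {G H : Type*} [Group G] [Group H] (f : G →* H)
    (hf : Function.Surjective f) (hker : f.ker ≤ center G) {S : Subgroup H} [IsCyclic S]
    {a b : G} (ha : f a ∈ S) (hb : f b ∈ S) : Commute a b := by
  obtain ⟨s, hs⟩ := IsCyclic.exists_generator (α := S)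
  obtain ⟨g, hg⟩ := hf s
  have hlift : ∀ x, f x ∈ S → ∃ i : ℤ, ∃ t ∈ center G, x = g ^ i * t := by
    intro x hx
    obtain ⟨i, hi⟩ := mem_zpowers_iff.mp (hs ⟨f x, hx⟩)
    refine ⟨i, (g ^ i)⁻¹ * x, hker ?_, (mul_inv_cancel_left _ _).symm⟩
    rw [MonoidHom.mem_ker, map_mul, map_inv, map_zpow, hg, inv_mul_eq_one]
    exact congrArg Subtype.val hi
  obtain ⟨i, t, ht, rfl⟩ := hlift a ha
  obtain ⟨j, u, hu, rfl⟩ := hlift b hb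
  exact ((Commute.zpow_zpow_self g i j).mul_right (mem_center_iff.mp hu _)).mul_left
    (mem_center_iff.mp ht _).symm

theorem commute_of_map_mem_ker_of_map_mem_range {G H : Type*} [Group G] [CommGroup H]
    (f : G →* H) (hf : Function.Surjective f) (hker : f.ker ≤ center G) (α : G ≃* G)
    (β : H ≃* H) (hαβ : ∀ x, f (α x) = β (f x)) (hfix : ∀ x ∈ f.ker, α x = x) {a b : G}
    (ha : f a ∈ β.commutatorMap.ker) (hb : f b ∈ β.commutatorMap.range) : Commute a b := by
  obtain ⟨y', hy⟩ := hb
  obtain ⟨y, rfl⟩ := hf y'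
  have ht : (α y * y⁻¹)⁻¹ * b ∈ f.ker := by
    rw [MonoidHom.mem_ker, map_mul, map_inv, map_mul, map_inv, hαβ, ← hy,
      MulEquiv.commutatorMap_apply, div_eq_mul_inv, inv_mul_cancel]
  have hay : ⁅a, y⁆ ∈ f.ker := by
    rw [MonoidHom.mem_ker, map_commutatorElement, commutatorElement_eq_one_iff_mul_comm]
    exact mul_comm _ _
  have haa : a⁻¹ * α a ∈ f.ker := by
    rw [MonoidHom.mem_ker, map_mul, map_inv, hαβ, MulEquiv.mem_ker_commutatorMap.mp ha,
      inv_mul_cancel]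
  rw [← mul_inv_cancel_left (α y * y⁻¹) b]
  exact (commute_apply_mul_inv α (hker haa) (hker hay) (hfix _ hay)).mul_right
    (mem_center_iff.mp (hker ht) a)

theorem commute_of_isComplement' {G H : Type*} [Group G] [Group H] (f : G →* H)
    (hf : Function.Surjective f) {S T : Subgroup H} (hST : IsComplement' S T)
    (hS : ∀ a b, f a ∈ S → f b ∈ S → Commute a b)
    (hT : ∀ a b, f a ∈ T → f b ∈ T → Commute a b)
    (hST' : ∀ a b, f a ∈ S → f b ∈ T → Commute a b) (u v : G) : Commute u v := by
  have hdecomp : ∀ u : G, ∃ a b, f a ∈ S ∧ f b ∈ T ∧ a * b = u := by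
    intro u
    obtain ⟨⟨s, t⟩, hst⟩ := hST.2 (f u)
    obtain ⟨a, ha⟩ := hf s
    refine ⟨a, a⁻¹ * u, ha ▸ s.2, ?_, mul_inv_cancel_left a u⟩
    rw [map_mul, map_inv, ha, ← hst, inv_mul_cancel_left]
    exact t.2
  obtain ⟨a, b, ha, hb, rfl⟩ := hdecomp u
  obtain ⟨a', b', ha', hb', rfl⟩ := hdecomp v
  exact ((hS a a' ha ha').mul_right (hST' a b' ha hb')).mul_left
    ((hST' a' b ha' hb).symm.mul_right (hT b b' hb hb'))

theorem IsPGroup.commute_of_coprime_mulAut_of_fixed_point {G Q : Type*} [Group G]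
    [CommGroup Q] [Finite Q] {p : ℕ} [Fact p.Prime] (hG : IsPGroup p G) (f : G →* Q)
    (hf : Function.Surjective f) (hker : f.ker ≤ center G) (hrank : Group.rank Q ≤ 2)
    (α : G ≃* G) (hα : (orderOf α).Coprime p) (hα1 : α ≠ 1) (β : Q ≃* Q)
    (hαβ : ∀ x, f (α x) = β (f x)) (hfix : ∀ x ∈ f.ker, α x = x) {q : Q} (hq : β q = q)
    (hq1 : q ≠ 1) (u v : G) : Commute u v := by
  have hQ : IsPGroup p Q := hG.of_surjective f hf
  have hcompl := β.isComplement'_ker_range_commutatorMap hQ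
    (MulEquiv.pow_eq_one_of_semiconj f hf α β hαβ (pow_orderOf_eq_one α)) hα
  have hC : β.commutatorMap.ker ≠ ⊥ := fun h =>
    hq1 <| mem_bot.mp (h ▸ MulEquiv.mem_ker_commutatorMap.mpr hq)
  have hK : β.commutatorMap.range ≠ ⊥ := by
    intro h
    refine hα1 (hG.mulAut_eq_one_of_fixes_ker_of_fixes_quotient α hα f hfix fun x => ?_)
    have hfx : β.commutatorMap (f x) ∈ β.commutatorMap.range := ⟨_, rfl⟩
    rwa [h, mem_bot, MulEquiv.commutatorMap_apply, div_eq_one, ← hαβ] at hfx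
  have := hQ.isCyclic_of_disjoint_of_rank_le_two hrank hcompl.disjoint hK
  have := hQ.isCyclic_of_disjoint_of_rank_le_two hrank hcompl.disjoint.symm hC
  exact commute_of_isComplement' f hf hcompl
    (fun _ _ => commute_of_map_mem_of_isCyclic f hf hker)
    (fun _ _ => commute_of_map_mem_of_isCyclic f hf hker)
    (fun _ _ => commute_of_map_mem_ker_of_map_mem_range f hf hker α β hαβ hfix) u v

/-- D a finite non-abelian p-group, z ∈ Z(D), D/⟨z⟩ abelian of rank 2.
Every nontrivial p'-automorphism α of D centralizing z acts freely on D/⟨z⟩: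
the only coset of ⟨z⟩ fixed by the induced map is the trivial one. -/
theorem stmt1 (p : ℕ) [Fact p.Prime] (D : Type*) [Group D] [Fintype D]
    (hp : IsPGroup p D) (hnab : ¬ ∀ a b : D, a * b = b * a)
    (z : D) (hz : z ∈ Subgroup.center D)
    [hN : (Subgroup.zpowers z).Normal]
    (hab : ∀ a b : D ⧸ Subgroup.zpowers z, a * b = b * a)
    (hrk : Group.rank (D ⧸ Subgroup.zpowers z) = 2)
    (α : D ≃* D) (hord : Nat.Coprime (orderOf α) p) (hαz : α z = z)
    (hα1 : α ≠ 1) :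
    ∀ w : D, α w * w⁻¹ ∈ Subgroup.zpowers z → w ∈ Subgroup.zpowers z := by
  intro w hw
  by_contra hwZ
  let : CommGroup (D ⧸ zpowers z) := { mul_comm := hab }
  let f := QuotientGroup.mk' (zpowers z)
  have hfix : ∀ x ∈ f.ker, α x = x := by
    rw [QuotientGroup.ker_mk']
    rintro _ ⟨k, rfl⟩
    simp [hαz]
  have hmap : (zpowers z).map (α : D →* D) = zpowers z := by
    rw [MonoidHom.map_zpowers]
    exact congrArg zpowers hαz
  have hαw : f (α w) = f w := by
    rwa [← mul_inv_eq_one, ← map_inv, ← map_mul, ← MonoidHom.mem_ker, QuotientGroup.ker_mk']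
  refine hnab fun u v => hp.commute_of_coprime_mulAut_of_fixed_point f
    (QuotientGroup.mk'_surjective _) (by rw [QuotientGroup.ker_mk']; exact zpowers_le.mpr hz)
    hrk.le α hord hα1 (QuotientGroup.congr _ _ α hmap)
    (fun x => (QuotientGroup.congr_mk' _ _ α hmap x).symm) hfix (q := f w) ?_
    (fun h => hwZ ((QuotientGroup.eq_one_iff w).mp h)) u v
  rwa [← QuotientGroup.congr_mk' _ _ α hmap w] at hαw
end

section
/- Let D be a finite minimal non-abelian group (all proper subgroups are abelian but D is non-abelian). Then the Frattini subgroup Φ(D) is contained in the center Z(D). -/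
/-!
Every element `b` of a non-cyclic finite group lies in some maximal subgroup `M`, and the
Frattini subgroup is contained in `M`. If the maximal subgroups are abelian, every element of
`Φ(G)` therefore commutes with `b`.
-/

lemma not_isCyclic_of_not_comm {G : Type*} [Group G] (hnab : ¬ ∀ a b : G, a * b = b * a) :
    ¬ IsCyclic G := fun _ =>
  hnab fun a b => letI := IsCyclic.commGroup (α := G); mul_comm a b

theorem frattini_le_center_of_isCoatom_comm {G : Type*} [Group G] [IsCoatomic (Subgroup G)]
    (hcyc : ¬ IsCyclic G)
    (hmax : ∀ M : Subgroup G, IsCoatom M → ∀ a ∈ M, ∀ b ∈ M, a * b = b * a) :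
    frattini G ≤ Subgroup.center G := by
  intro x hx
  rw [Subgroup.mem_center_iff]
  intro b
  have hb : Subgroup.zpowers b ≠ ⊤ := fun h =>
    hcyc (isCyclic_iff_exists_zpowers_eq_top.mpr ⟨b, h⟩)
  obtain ⟨M, hM, hbM⟩ := (eq_top_or_exists_le_coatom (Subgroup.zpowers b)).resolve_left hb
  exact hmax M hM b (hbM (Subgroup.mem_zpowers b)) x (frattini_le_coatom hM hx)

/-- In a finite minimal non-abelian group the Frattini subgroup
is contained in the center. -/
theorem stmt2 (D : Type*) [Group D] [Fintype D]
    (hnab : ¬ ∀ a b : D, a * b = b * a)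
    (hmin : ∀ H : Subgroup D, H ≠ ⊤ → ∀ a ∈ H, ∀ b ∈ H, a * b = b * a) :
    frattini D ≤ Subgroup.center D :=
  frattini_le_center_of_isCoatom_comm (not_isCyclic_of_not_comm hnab)
    fun M hM => hmin M hM.1
end

section
/- Let P be a homocyclic abelian p-group of exponent p² (a direct product of isomorphic cyclic groups of order p²), and let A be a p'-group of automorphisms of P. Then P with its A-action is A-equivariantly isomorphic (as an A-set, via a bijection commuting with the action) to Ω(P) × Ω(P) with the componentwise A-action. -/
/-!
Write `Ω = {u | u ^ p = 1}`. Since `P` is homocyclic of exponent `p²`, the `p`-power map sends `P`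
onto `Ω`, with fibres the cosets of `Ω`. Any section `s` of it over `Ω` gives the bijection
`x ↦ (x ^ p, s (x ^ p)⁻¹ * x)` onto `Ω × Ω`, which is `A`-equivariant as soon as `s` is. An
equivariant section is obtained by averaging an arbitrary one over `A` and then taking the
`|A|⁻¹ (mod p)`-th power, which is possible because `|A|` is prime to `p`.
-/

theorem pow_zpow_gcdA_eq_self {G : Type*} [Group G] {c n : ℕ} (h : c.Coprime n) {u : G}
    (hu : u ^ n = 1) : (u ^ c) ^ c.gcdA n = u := by
  have key := congr_arg (u ^ ·) (c.gcd_eq_gcd_ab n)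
  rwa [zpow_add, zpow_mul, zpow_mul, zpow_natCast, zpow_natCast, zpow_natCast, h.gcd_eq_one,
    pow_one, hu, one_zpow, mul_one, eq_comm] at key

theorem ZMod.exists_eq_mul_of_mul_eq_zero {n : ℕ} (hn : n ≠ 0) {v : ZMod (n ^ 2)}
    (h : (n : ZMod (n ^ 2)) * v = 0) : ∃ c : ZMod (n ^ 2), v = (n : ZMod (n ^ 2)) * c := by
  have : NeZero (n ^ 2) := ⟨pow_ne_zero 2 hn⟩
  rw [← v.natCast_zmod_val, ← Nat.cast_mul, ZMod.natCast_eq_zero_iff] at h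
  have h' : n * n ∣ n * v.val := by rwa [← pow_two]
  obtain ⟨c, hc⟩ := (Nat.mul_dvd_mul_iff_left (Nat.pos_of_ne_zero hn)).mp h'
  exact ⟨c, by rw [← v.natCast_zmod_val, hc, Nat.cast_mul]⟩

section Homocyclic

variable {P ι : Type*} [CommGroup P] {n : ℕ}

theorem pow_pow_eq_one_of_mulEquiv (e : P ≃* (ι → Multiplicative (ZMod (n ^ 2)))) (x : P) :
    (x ^ n) ^ n = 1 := by
  apply e.injective
  funext i
  apply Multiplicative.toAdd.injective
  simp [← pow_mul, ← sq, nsmul_eq_mul]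

theorem exists_pow_eq_of_pow_eq_one_of_mulEquiv (e : P ≃* (ι → Multiplicative (ZMod (n ^ 2))))
    (hn : n ≠ 0) {u : P} (hu : u ^ n = 1) : ∃ y, y ^ n = u := by
  have h i : (n : ZMod (n ^ 2)) * (e u i).toAdd = 0 := by
    simpa [nsmul_eq_mul] using congr_arg (fun x => (e x i).toAdd) hu
  choose c hc using fun i => ZMod.exists_eq_mul_of_mul_eq_zero hn (h i)
  refine ⟨e.symm fun i => .ofAdd (c i), e.injective ?_⟩
  funext i
  apply Multiplicative.toAdd.injective
  simp [nsmul_eq_mul, ← hc i]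

end Homocyclic

section Averaging

variable (G : Type*) {M : Type*} [Group G] [Fintype G] [CommGroup M] [MulDistribMulAction G M]

noncomputable def averageSection (k : ℤ) (s : M → M) (u : M) : M :=
  (∏ g : G, g • s (g⁻¹ • u)) ^ k

variable {G}

theorem averageSection_smul (k : ℤ) (s : M → M) (g : G) (u : M) :
    averageSection G k s (g • u) = g • averageSection G k s u := by
  rw [averageSection, averageSection, smul_zpow', Finset.smul_prod']
  congr 1
  refine Fintype.prod_equiv (Equiv.mulLeft g⁻¹) _ _ fun h => ?_
  simp [mul_smul]

theorem averageSection_pow {n : ℕ} (hG : (Nat.card G).Coprime n) {s : M → M}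
    (hs : ∀ u : M, u ^ n = 1 → s u ^ n = u) {u : M} (hu : u ^ n = 1) :
    averageSection G ((Nat.card G).gcdA n) s u ^ n = u := by
  have hterm (g : G) : (g • s (g⁻¹ • u)) ^ n = u := by
    rw [← smul_pow', hs _ (by rw [← smul_pow', hu, smul_one]), smul_inv_smul]
  rw [averageSection, ← zpow_natCast, ← zpow_mul, zpow_mul', zpow_natCast, ← Finset.prod_pow,
    Finset.prod_congr rfl fun g _ => hterm g, Finset.prod_const, Finset.card_univ,
    ← Nat.card_eq_fintype_card, pow_zpow_gcdA_eq_self hG hu]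

end Averaging

section PowSection

variable {M : Type*} [CommGroup M] {n : ℕ}

def powSectionEquiv (hexp : ∀ x : M, (x ^ n) ^ n = 1) (s : M → M)
    (hs : ∀ u : M, u ^ n = 1 → s u ^ n = u) :
    M ≃ {x : M // x ^ n = 1} × {x : M // x ^ n = 1} where
  toFun x := (⟨x ^ n, hexp x⟩,
    ⟨(s (x ^ n))⁻¹ * x, by rw [mul_pow, inv_pow, hs _ (hexp x), inv_mul_cancel]⟩)
  invFun uw := s uw.1 * uw.2
  left_inv x := mul_inv_cancel_left _ _
  right_inv := by
    rintro ⟨⟨u, hu⟩, ⟨w, hw⟩⟩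
    have hpow : (s u * w) ^ n = u := by rw [mul_pow, hs u hu, hw, mul_one]
    ext <;> simp [hpow]

theorem powSectionEquiv_smul {G : Type*} [Monoid G] [MulDistribMulAction G M]
    (hexp : ∀ x : M, (x ^ n) ^ n = 1) {s : M → M} (hs : ∀ u : M, u ^ n = 1 → s u ^ n = u)
    (hsmul : ∀ (g : G) (u : M), s (g • u) = g • s u) (g : G) (x : M) :
    ((powSectionEquiv hexp s hs (g • x)).1 : M) = g • ((powSectionEquiv hexp s hs x).1 : M) ∧
      ((powSectionEquiv hexp s hs (g • x)).2 : M) = g • ((powSectionEquiv hexp s hs x).2 : M) :=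
  ⟨(smul_pow' g x n).symm, by simp [powSectionEquiv, ← smul_pow', hsmul, smul_mul', smul_inv']⟩

end PowSection

/-- If P is a homocyclic abelian p-group of exponent p² and A is a
p'-group of automorphisms, then P is A-equivariantly bijective to Ω(P) × Ω(P)
with the componentwise action. -/
theorem stmt6 (p : ℕ) [Fact p.Prime] (P : Type*) [CommGroup P] [Fintype P]
    (hhomo : ∃ r : ℕ, Nonempty (P ≃* (Fin r → Multiplicative (ZMod (p ^ 2)))))
    (A : Subgroup (MulAut P)) (hA : Nat.Coprime (Nat.card A) p) :
    ∃ φ : P ≃ {x : P // x ^ p = 1} × {x : P // x ^ p = 1},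
      ∀ a ∈ A, ∀ x : P,
        ((φ (a x)).1 : P) = a ((φ x).1 : P) ∧ ((φ (a x)).2 : P) = a ((φ x).2 : P) := by
  obtain ⟨r, ⟨e⟩⟩ := hhomo
  have : Fintype A := Fintype.ofFinite A
  choose! s hs using fun (u : P) (hu : u ^ p = 1) =>
    exists_pow_eq_of_pow_eq_one_of_mulEquiv e (Fact.out : p.Prime).ne_zero hu
  have hexp := pow_pow_eq_one_of_mulEquiv e
  have hs_avg := fun (u : P) => averageSection_pow (G := A) (u := u) hA hs
  refine ⟨powSectionEquiv hexp _ hs_avg, fun a ha x => ?_⟩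
  exact powSectionEquiv_smul hexp hs_avg (averageSection_smul _ s) ⟨a, ha⟩ x
end

section
/- Let A be a finite group acting on a finite group P such that P decomposes as an internal direct product P = P₁ × ⋯ × Pₙ of A-invariant subgroups. If for each i there exists xᵢ ∈ Pᵢ with C_A(xᵢ) = C_A(Pᵢ), then for x = x₁⋯xₙ one has C_A(x) = C_A(P₁) ∩ ⋯ ∩ C_A(Pₙ) = C_A(P). -/
/-!
An element `a ∈ A` fixing `x = x₁⋯xₙ` also fixes each factor: `a • x = (a • x₁)⋯(a • xₙ)` with
`a • xᵢ ∈ Pᵢ`, and a product of commuting elements of independent subgroups determines its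
factors. By the hypothesis on `xᵢ`, `a` then centralizes every `Pᵢ`, and the subgroup of
`a`-fixed points, containing every `Pᵢ`, is all of `P`.
-/

open Finset Function

theorem Subgroup.noncommProd_eq_noncommProd_iff_of_iSupIndep {ι G : Type*} [Fintype ι]
    [Group G] {H : ι → Subgroup G}
    (hcomm : Pairwise fun i j => ∀ x y : G, x ∈ H i → y ∈ H j → Commute x y)
    (hind : iSupIndep H) {y z : ι → G} (hy : ∀ i, y i ∈ H i) (hz : ∀ i, z i ∈ H i)
    (hyc : ((univ : Finset ι) : Set ι).Pairwise (Commute on y))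
    (hzc : ((univ : Finset ι) : Set ι).Pairwise (Commute on z)) :
    univ.noncommProd y hyc = univ.noncommProd z hzc ↔ y = z := by
  refine ⟨fun h => ?_, fun h => by subst h; rfl⟩
  have hinj := Subgroup.injective_noncommPiCoprod_of_iSupIndep (hcomm := hcomm) hind
  funext i
  exact congrArg Subtype.val
    (congrFun (@hinj (fun i => ⟨y i, hy i⟩) (fun i => ⟨z i, hz i⟩) h) i)

theorem Finset.smul_noncommProd {ι A P : Type*} [Monoid A] [Monoid P] [MulDistribMulAction A P]
    (s : Finset ι) (f : ι → P) (comm : (s : Set ι).Pairwise (Commute on f)) (a : A) :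
    a • s.noncommProd f comm =
      s.noncommProd (fun i => a • f i)
        fun _ hi _ hj hij => (comm hi hj hij).map (MulDistribMulAction.toMonoidHom P a) :=
  map_noncommProd s f comm (MulDistribMulAction.toMonoidHom P a)

theorem smul_eq_self_of_mem_iSup {ι A P : Type*} [Monoid A] [Group P] [MulDistribMulAction A P]
    {H : ι → Subgroup P} {a : A} (h : ∀ i, ∀ q ∈ H i, a • q = q) :
    ∀ q ∈ ⨆ i, H i, a • q = q :=
  iSup_le (a := (MulDistribMulAction.toMonoidHom P a).eqLocus (MonoidHom.id P))
    fun i q hq => h i q hq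

theorem stmt7_general (A P : Type*) [Group A] [Group P]
    [MulDistribMulAction A P]
    (n : ℕ) (Psub : Fin n → Subgroup P)
    (hinv : ∀ i, ∀ a : A, ∀ q ∈ Psub i, a • q ∈ Psub i)
    (hcomm : ∀ i j, i ≠ j → ∀ q ∈ Psub i, ∀ r ∈ Psub j, Commute q r)
    (hind : iSupIndep Psub)
    (hsup : ⨆ i, Psub i = ⊤)
    (x : Fin n → P) (hx : ∀ i, x i ∈ Psub i)
    (hxc : ∀ i j, i ≠ j → Commute (x i) (x j))
    (hreg : ∀ i, ∀ a : A, (a • x i = x i) ↔ (∀ q ∈ Psub i, a • q = q)) :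
    ∀ a : A,
      ((a • Finset.univ.noncommProd x (fun i _ j _ h => hxc i j h) =
          Finset.univ.noncommProd x (fun i _ j _ h => hxc i j h)) ↔
        (∀ q : P, a • q = q)) ∧
      ((∀ i, ∀ q ∈ Psub i, a • q = q) ↔ (∀ q : P, a • q = q)) := by
  intro a
  have fixes_all : (∀ i, ∀ q ∈ Psub i, a • q = q) ↔ ∀ q : P, a • q = q :=
    ⟨fun h q => smul_eq_self_of_mem_iSup h q (hsup ▸ Subgroup.mem_top q), fun h _ q _ => h q⟩
  refine ⟨⟨fun hfix => fixes_all.1 fun i => (hreg i a).1 ?_, fun h => h _⟩, fixes_all⟩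
  have hfactors := (Subgroup.noncommProd_eq_noncommProd_iff_of_iSupIndep
    (fun i j hij q r hq hr => hcomm i j hij q hq r hr) hind (fun i => hinv i a _ (hx i)) hx
    _ _).1 ((Finset.smul_noncommProd univ x _ a).symm.trans hfix)
  exact congrFun hfactors i

/-- If a finite group A acts on a finite group P which is an internal
direct product of A-invariant subgroups P₁, …, Pₙ, and xᵢ ∈ Pᵢ satisfies
C_A(xᵢ) = C_A(Pᵢ) for each i, then for x = x₁⋯xₙ we have
C_A(x) = C_A(P₁) ∩ ⋯ ∩ C_A(Pₙ) = C_A(P). -/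
theorem stmt7 (A P : Type*) [Group A] [Group P] [Fintype A] [Fintype P]
    [MulDistribMulAction A P]
    (n : ℕ) (Psub : Fin n → Subgroup P)
    (hinv : ∀ i, ∀ a : A, ∀ q ∈ Psub i, a • q ∈ Psub i)
    (hcomm : ∀ i j, i ≠ j → ∀ q ∈ Psub i, ∀ r ∈ Psub j, Commute q r)
    (hind : iSupIndep Psub)
    (hsup : ⨆ i, Psub i = ⊤)
    (x : Fin n → P) (hx : ∀ i, x i ∈ Psub i)
    (hxc : ∀ i j, i ≠ j → Commute (x i) (x j))
    (hreg : ∀ i, ∀ a : A, (a • x i = x i) ↔ (∀ q ∈ Psub i, a • q = q)) :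
    ∀ a : A,
      ((a • Finset.univ.noncommProd x (fun i _ j _ h => hxc i j h) =
          Finset.univ.noncommProd x (fun i _ j _ h => hxc i j h)) ↔
        (∀ q : P, a • q = q)) ∧
      ((∀ i, ∀ q ∈ Psub i, a • q = q) ↔ (∀ q : P, a • q = q)) :=
  stmt7_general A P n Psub hinv hcomm hind hsup x hx hxc hreg
end

section
/- Let M = (1 + δ_{ij})_{i,j=1}^3. Then for every nonzero x = (x₁, x₂, x₃) ∈ ℤ⁹ with xᵢ ∈ ℤ³, one has 16·x (M ⊗ M)⁻¹ xᵀ = Σᵢ 4 xᵢ M⁻¹ xᵢᵀ + Σ_{i<j} 4 (xᵢ−xⱼ) M⁻¹ (xᵢ−xⱼ)ᵀ ≥ 9. Hence the minimum of the quadratic form 16·x(M⊗M)⁻¹xᵀ over nonzero integer vectors is 9. -/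
open Kronecker

/-- The 3×3 integer matrix with 2's on the diagonal and 1's elsewhere. -/
def Mz9 : Matrix (Fin 3) (Fin 3) ℤ := Matrix.of fun i j => if i = j then 2 else 1

/-- Its rational version. -/
noncomputable def Mq9 : Matrix (Fin 3) (Fin 3) ℚ := Mz9.map Int.cast

/-- The quadratic form y ↦ 4·y M⁻¹ yᵀ on rational vectors of length 3. -/
noncomputable def q39 (y : Fin 3 → ℚ) : ℚ := 4 * dotProduct y (Mq9⁻¹.mulVec y)

/-- The quadratic form x ↦ 16·x (M ⊗ M)⁻¹ xᵀ on rational vectors of length 9. -/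
noncomputable def q99 (x : Fin 3 × Fin 3 → ℚ) : ℚ :=
  16 * dotProduct x ((Mq9 ⊗ₖ Mq9)⁻¹.mulVec x)

/-- The i-th block (of length 3) of an integer vector of length 9, as rationals. -/
def blk9 (x : Fin 3 × Fin 3 → ℤ) (i : Fin 3) : Fin 3 → ℚ := fun j => (x (i, j) : ℚ)

/-!
Since `M⁻¹ = I - J/4` (with `J` the all-ones matrix), `q(y) := 4 y M⁻¹ yᵀ = 4 ∑ yᵢ² - (∑ yᵢ)²`
equals `∑ yᵢ² + ∑_{i<j} (yᵢ - yⱼ)²`. As `(M ⊗ M)⁻¹ = M⁻¹ ⊗ M⁻¹`, the form `16 x (M ⊗ M)⁻¹ xᵀ`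
has the same shape one level up: `∑ q(xᵢ) + ∑_{i<j} q(xᵢ - xⱼ)`. In a sum
`f u + f v + f w + f (u - v) + f (u - w) + f (v - w)` with `u, v, w` not all zero, at least three
arguments are nonzero (if `u ≠ 0`, then so is one of `v, u - v` and one of `w, u - w`). With
`f = (·)²` on `ℤ` this gives `q ≥ 3` on `ℤ³ ∖ 0`, and then with `f = q` it gives `≥ 9` on `ℤ⁹ ∖ 0`.
-/

section SumWithDiffs

variable {G H R : Type*}

def sumWithDiffs [Sub G] [Add R] (f : G → R) (u v w : G) : R :=
  f u + f v + f w + f (u - v) + f (u - w) + f (v - w)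

theorem sumWithDiffs_comp [AddGroup G] [AddGroup H] [Add R] (f : H → R) (φ : G →+ H) (u v w : G) :
    sumWithDiffs (f ∘ φ) u v w = sumWithDiffs f (φ u) (φ v) (φ w) := by
  simp only [sumWithDiffs, Function.comp_apply, map_sub]

theorem sum_add_sum_lt_eq_sumWithDiffs [Sub G] [AddCommMonoid R] (f : G → R) (y : Fin 3 → G) :
    (∑ i, f (y i)) + ∑ i, ∑ j, (if i < j then f (y i - y j) else 0) =
      sumWithDiffs f (y 0) (y 1) (y 2) := by
  simp [Fin.sum_univ_three, sumWithDiffs, add_assoc]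

theorem three_nsmul_le_sumWithDiffs [AddGroup G] [AddCommMonoid R] [PartialOrder R]
    [IsOrderedAddMonoid R] {f : G → R} {c : R} (hf : ∀ y, 0 ≤ f y) (hc : ∀ y, y ≠ 0 → c ≤ f y)
    {u v w : G} (h : u ≠ 0 ∨ v ≠ 0 ∨ w ≠ 0) : 3 • c ≤ sumWithDiffs f u v w := by
  have pair (a b : G) (hab : a = 0 → b ≠ 0) : c ≤ f a + f b := by
    by_cases ha : a = 0
    · exact le_add_of_nonneg_of_le (hf a) (hc b (hab ha))
    · exact le_add_of_le_of_nonneg (hc a ha) (hf b)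
  rw [three_nsmul]
  rcases h with hu | hv | hw
  · refine (le_add_of_le_of_nonneg (add_le_add (hc u hu) (add_le_add
      (pair v (u - v) fun hv => by rwa [hv, sub_zero])
      (pair w (u - w) fun hw => by rwa [hw, sub_zero]))) (hf (v - w))).trans_eq ?_
    unfold sumWithDiffs; abel
  · refine (le_add_of_le_of_nonneg (add_le_add (hc v hv) (add_le_add
      (pair u (u - v) fun hu => by rwa [hu, zero_sub, neg_ne_zero])
      (pair w (v - w) fun hw => by rwa [hw, sub_zero]))) (hf (u - w))).trans_eq ?_
    unfold sumWithDiffs; abel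
  · refine (le_add_of_le_of_nonneg (add_le_add (hc w hw) (add_le_add
      (pair u (u - w) fun hu => by rwa [hu, zero_sub, neg_ne_zero])
      (pair v (v - w) fun hv => by rwa [hv, zero_sub, neg_ne_zero]))) (hf (u - v))).trans_eq ?_
    unfold sumWithDiffs; abel

end SumWithDiffs

theorem ne_zero_or_of_fin_three_ne_zero {M : Type*} [Zero M] {y : Fin 3 → M} (hy : y ≠ 0) :
    y 0 ≠ 0 ∨ y 1 ≠ 0 ∨ y 2 ≠ 0 := by
  simpa [Function.ne_iff, Fin.exists_fin_succ] using hy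

theorem Mq9_inv : Mq9⁻¹ = Matrix.of fun i j => if i = j then 3 / 4 else -1 / 4 := by
  refine Matrix.inv_eq_right_inv ?_
  ext i j
  fin_cases i <;> fin_cases j <;> simp [Mq9, Mz9, Matrix.mul_apply, Fin.sum_univ_three] <;> norm_num

theorem q39_eq_sumWithDiffs (y : Fin 3 → ℚ) : q39 y = sumWithDiffs (· ^ 2) (y 0) (y 1) (y 2) := by
  simp [q39, Mq9_inv, sumWithDiffs, dotProduct, Matrix.mulVec, Fin.sum_univ_three]
  ring

theorem q39_nonneg (y : Fin 3 → ℚ) : 0 ≤ q39 y := by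
  rw [q39_eq_sumWithDiffs, sumWithDiffs]
  positivity

theorem three_le_q39_intCast {y : Fin 3 → ℤ} (hy : y ≠ 0) :
    3 ≤ q39 ((Int.castAddHom ℚ).compLeft (Fin 3) y) := by
  have h := three_nsmul_le_sumWithDiffs (f := (· ^ 2) ∘ Int.castAddHom ℚ) (c := 1)
    (fun _ => sq_nonneg _) (fun t ht => show (1 : ℚ) ≤ (t : ℚ) ^ 2 from
      (one_le_sq_iff_one_le_abs _).2 (mod_cast Int.one_le_abs ht))
    (ne_zero_or_of_fin_three_ne_zero hy)
  rw [sumWithDiffs_comp, nsmul_one] at h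
  rw [q39_eq_sumWithDiffs]
  exact_mod_cast h

theorem q99_eq_sumWithDiffs (x : Fin 3 × Fin 3 → ℚ) :
    q99 x = sumWithDiffs q39 (Function.curry x 0) (Function.curry x 1) (Function.curry x 2) := by
  simp [q99, Matrix.inv_kronecker, Mq9_inv, q39_eq_sumWithDiffs, sumWithDiffs, dotProduct,
    Matrix.mulVec, Fintype.sum_prod_type, Fin.sum_univ_three]
  ring

theorem nine_le_q99_intCast {x : Fin 3 × Fin 3 → ℤ} (hx : x ≠ 0) :
    9 ≤ q99 (fun ij => (x ij : ℚ)) := by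
  have hrows : Function.curry x ≠ 0 := fun h =>
    hx (funext fun ij => congr_fun (congr_fun h ij.1) ij.2)
  have h := three_nsmul_le_sumWithDiffs (f := q39 ∘ (Int.castAddHom ℚ).compLeft (Fin 3))
    (fun _ => q39_nonneg _) (fun _ => three_le_q39_intCast) (ne_zero_or_of_fin_three_ne_zero hrows)
  rw [sumWithDiffs_comp] at h
  rw [q99_eq_sumWithDiffs]
  exact (by norm_num : (9 : ℚ) = 3 • 3).trans_le h

/-- For every nonzero x ∈ ℤ⁹ written in blocks x₁,x₂,x₃ ∈ ℤ³,
16·x(M⊗M)⁻¹xᵀ = Σᵢ 4xᵢM⁻¹xᵢᵀ + Σ_{i<j} 4(xᵢ−xⱼ)M⁻¹(xᵢ−xⱼ)ᵀ ≥ 9, and the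
minimum 9 is attained. -/
theorem stmt9 :
    (∀ x : Fin 3 × Fin 3 → ℤ, x ≠ 0 →
      q99 (fun ij => (x ij : ℚ)) =
        (∑ i : Fin 3, q39 (blk9 x i)) +
          ∑ i : Fin 3, ∑ j : Fin 3, (if i < j then q39 (blk9 x i - blk9 x j) else 0) ∧
      (9 : ℚ) ≤ q99 (fun ij => (x ij : ℚ))) ∧
    ∃ x : Fin 3 × Fin 3 → ℤ, x ≠ 0 ∧ q99 (fun ij => (x ij : ℚ)) = 9 := by
  refine ⟨fun x hx => ⟨?_, ?_⟩, Pi.single (0, 0) 1, by simp, ?_⟩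
  · rw [q99_eq_sumWithDiffs, sum_add_sum_lt_eq_sumWithDiffs]
    rfl
  · exact nine_le_q99_intCast hx
  · rw [q99_eq_sumWithDiffs]
    simp [sumWithDiffs, q39_eq_sumWithDiffs, Pi.single_apply]
    norm_num
end

section
/- The 6×6 symmetric positive definite integer matrix C₀ with rows (3,0,1,0,0,0), (0,2,0,1,0,0), (1,0,2,1,0,0), (0,1,1,2,1,0), (0,0,0,1,2,1), (0,0,0,0,1,2) has determinant 7, and the minimum of the quadratic form x ↦ 7³·x(7²C₀)⁻¹xᵀ = 7·x C₀⁻¹ xᵀ over nonzero integer vectors x ∈ ℤ⁶ equals 4, which is strictly less than 6. -/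
/-- The explicit 6×6 integer matrix (a modified E₆ Gram matrix). -/
def C0 : Matrix (Fin 6) (Fin 6) ℤ :=
  !![3, 0, 1, 0, 0, 0;
     0, 2, 0, 1, 0, 0;
     1, 0, 2, 1, 0, 0;
     0, 1, 1, 2, 1, 0;
     0, 0, 0, 1, 2, 1;
     0, 0, 0, 0, 1, 2]

/-- Its rational version. -/
noncomputable def C0q : Matrix (Fin 6) (Fin 6) ℚ := C0.map Int.cast

/-- Integer vectors viewed as rational vectors. -/
def vq6 (x : Fin 6 → ℤ) : Fin 6 → ℚ := fun i => (x i : ℚ)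

/-!
`C₀` is positive definite (its `LDLᵀ` decomposition is explicit), so Cauchy–Schwarz for the form
of `C₀`, applied to `eᵢ` and `C₀⁻¹x`, gives `xᵢ² ≤ (C₀)ᵢᵢ · xC₀⁻¹xᵀ`. Since `7C₀⁻¹ = adj C₀` is
integral, `q(x) = 7xC₀⁻¹xᵀ` is an integer. If `q(x) ≤ 3`, then `7xᵢ² ≤ 2q(x) < 7` forces
`xᵢ = 0` for every `i ≥ 1` (where `(C₀)ᵢᵢ = 2`), and `q(x₀e₀) = 4x₀²` because `(adj C₀)₀₀ = 4`.
-/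

open Matrix

theorem Matrix.inv_smul_of_ne_zero {K n : Type*} [Field K] [Fintype n] [DecidableEq n]
    {A : Matrix n n K} (hA : IsUnit A.det) {k : K} (hk : k ≠ 0) :
    (k • A)⁻¹ = k⁻¹ • A⁻¹ :=
  inv_eq_left_inv (by simp [hk, smul_smul, nonsing_inv_mul _ hA])

theorem Matrix.single_dotProduct_mulVec_single {R n : Type*} [CommSemiring R] [Fintype n]
    [DecidableEq n] (M : Matrix n n R) (i : n) (a : R) :
    Pi.single i a ⬝ᵥ M *ᵥ Pi.single i a = M i i * a ^ 2 := by
  rw [mulVec_single, single_dotProduct]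
  simp [sq, mul_comm, mul_left_comm]

theorem Matrix.PosSemidef.sq_le_diag_mul_dotProduct_inv_mulVec {K n : Type*} [Field K]
    [LinearOrder K] [IsStrictOrderedRing K] [StarRing K] [TrivialStar K] [Fintype n]
    [DecidableEq n] {A : Matrix n n K} (hA : A.PosSemidef) (hdet : IsUnit A.det)
    (x : n → K) (i : n) :
    x i ^ 2 ≤ A i i * (x ⬝ᵥ A⁻¹ *ᵥ x) := by
  have hsymm : LinearMap.IsSymm A.toBilin' := LinearMap.BilinForm.isSymm_iff.mp <|
    isSymm_toBilin'_iff_isSymm.mpr (isHermitian_iff_isSymm.mp hA.isHermitian)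
  have hnonneg (v : n → K) : 0 ≤ A.toBilin' v v := by
    simpa [toBilin'_apply'] using hA.dotProduct_mulVec_nonneg v
  have hcs := LinearMap.BilinForm.apply_sq_le_of_symm _ hnonneg hsymm (Pi.single i 1) (A⁻¹ *ᵥ x)
  simpa [toBilin'_apply', mulVec_mulVec, mul_nonsing_inv _ hdet, dotProduct_comm (A⁻¹ *ᵥ x) x]
    using hcs

theorem C0_det : C0.det = 7 := by
  simp [C0, det_succ_row_zero, Fin.sum_univ_succ]
  rfl

theorem C0_adjugate_zero_zero : C0.adjugate 0 0 = 4 := by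
  rw [adjugate_fin_succ_eq_det_submatrix]
  simp [C0, det_succ_row_zero, Fin.sum_univ_succ, submatrix]
  rfl

theorem C0q_det : C0q.det = 7 := by
  rw [C0q, ← Int.cast_det, C0_det, Int.cast_ofNat]

theorem isUnit_C0q_det : IsUnit C0q.det := by
  simp [C0q_det]

theorem C0q_inv : C0q⁻¹ = (7 : ℚ)⁻¹ • C0.adjugate.map Int.cast := by
  rw [inv_def, C0q_det, Ring.inverse_eq_inv']
  exact congrArg _ ((Int.castRingHom ℚ).map_adjugate C0).symm

theorem posSemidef_C0q : C0q.PosSemidef := by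
  refine .of_dotProduct_mulVec_nonneg ?_ fun x => ?_
  · ext i j
    fin_cases i <;> fin_cases j <;> rfl
  · -- the `LDLᵀ` decomposition of `C₀`; its pivots multiply to `det C₀ = 7`
    have hsos : star x ⬝ᵥ C0q *ᵥ x = 3 * (x 0 + x 2 / 3) ^ 2 + 2 * (x 1 + x 3 / 2) ^ 2
        + 5 / 3 * (x 2 + 3 / 5 * x 3) ^ 2 + 7 / 30 * x 3 ^ 2 + 3 / 2 * (x 4 + 2 / 3 * x 3) ^ 2
        + 2 * (x 5 + x 4 / 2) ^ 2 := by
      simp [C0q, C0, dotProduct, mulVec, Fin.sum_univ_succ]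
      ring
    rw [hsos]
    positivity

theorem seven_mul_C0q_inv_form_eq_cast (x : Fin 6 → ℤ) :
    7 * vq6 x ⬝ᵥ C0q⁻¹ *ᵥ vq6 x = ((x ⬝ᵥ C0.adjugate *ᵥ x : ℤ) : ℚ) := by
  rw [C0q_inv, smul_mulVec, dotProduct_smul, smul_eq_mul, ← mul_assoc,
    mul_inv_cancel₀ (by norm_num), one_mul]
  simp [vq6, dotProduct, mulVec]

theorem seven_mul_sq_le_C0_diag_mul_adjugate_form (x : Fin 6 → ℤ) (i : Fin 6) :
    7 * x i ^ 2 ≤ C0 i i * (x ⬝ᵥ C0.adjugate *ᵥ x) := by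
  have h := posSemidef_C0q.sq_le_diag_mul_dotProduct_inv_mulVec isUnit_C0q_det (vq6 x) i
  rw [show C0q i i = C0 i i from rfl] at h
  have hq : ((7 * x i ^ 2 : ℤ) : ℚ) ≤ ((C0 i i * (x ⬝ᵥ C0.adjugate *ᵥ x) : ℤ) : ℚ) := by
    rw [Int.cast_mul, Int.cast_mul, ← seven_mul_C0q_inv_form_eq_cast]
    simp only [vq6] at h
    push_cast
    linarith
  exact_mod_cast hq

theorem C0_adjugate_form_single_zero (a : ℤ) :
    Pi.single 0 a ⬝ᵥ C0.adjugate *ᵥ Pi.single 0 a = 4 * a ^ 2 := by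
  rw [single_dotProduct_mulVec_single, C0_adjugate_zero_zero]

theorem four_le_C0_adjugate_form {x : Fin 6 → ℤ} (hx : x ≠ 0) :
    4 ≤ x ⬝ᵥ C0.adjugate *ᵥ x := by
  by_contra! hlt
  have hvanish (i : Fin 6) (hi : i ≠ 0) : x i = 0 := by
    have hdiag : C0 i i = 2 := by fin_cases i <;> first | exact absurd rfl hi | rfl
    have h := seven_mul_sq_le_C0_diag_mul_adjugate_form x i
    rw [hdiag] at h
    rw [← Int.abs_lt_one_iff, ← sq_lt_one_iff_abs_lt_one]
    linarith
  have hx_eq : x = Pi.single 0 (x 0) := by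
    ext i
    by_cases hi : i = 0
    · subst hi
      simp
    · simp [hi, hvanish i hi]
  have hx0 : x 0 ≠ 0 := fun h => hx (by rw [hx_eq, h, Pi.single_zero])
  rw [hx_eq, C0_adjugate_form_single_zero] at hlt
  have : 0 < x 0 ^ 2 := by positivity
  linarith

/-- det C₀ = 7; the forms 7³·x(7²C₀)⁻¹xᵀ and 7·xC₀⁻¹xᵀ agree; the
minimum of 7·xC₀⁻¹xᵀ over nonzero integer vectors is 4 (attained), and 4 < 6. -/
theorem stmt10 :
    C0.det = 7 ∧
    (∀ x : Fin 6 → ℤ,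
      (7 : ℚ) ^ 3 * dotProduct (vq6 x) (((7 : ℚ) ^ 2 • C0q)⁻¹.mulVec (vq6 x)) =
        7 * dotProduct (vq6 x) (C0q⁻¹.mulVec (vq6 x))) ∧
    (∀ x : Fin 6 → ℤ, x ≠ 0 →
      (4 : ℚ) ≤ 7 * dotProduct (vq6 x) (C0q⁻¹.mulVec (vq6 x))) ∧
    (∃ x : Fin 6 → ℤ, x ≠ 0 ∧
      7 * dotProduct (vq6 x) (C0q⁻¹.mulVec (vq6 x)) = 4) ∧
    (4 : ℚ) < 6 := by
  refine ⟨C0_det, fun x => ?_, fun x hx => ?_, ⟨Pi.single 0 1, by simp, ?_⟩, by norm_num⟩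
  · rw [inv_smul_of_ne_zero isUnit_C0q_det (by norm_num), smul_mulVec, dotProduct_smul,
      smul_eq_mul]
    ring
  · rw [seven_mul_C0q_inv_form_eq_cast]
    exact_mod_cast four_le_C0_adjugate_form hx
  · rw [seven_mul_C0q_inv_form_eq_cast, C0_adjugate_form_single_zero]
    norm_num
end

section
/- The 6×6 integer matrix C₀ with rows (3,0,1,0,0,0), (0,2,0,1,0,0), (1,0,2,1,0,0), (0,1,1,2,1,0), (0,0,0,1,2,1), (0,0,0,0,1,2) admits no factorization C₀ = Qᵀ Q with Q an integer matrix (of any number of rows). -/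
/-!
If `QᵀQ = C₀` and `D` is the adjugate of `C₀`, so that `D C₀ = 7`, then `P = Q D Qᵀ` satisfies
`P² = 7P`. Thus `P / 7` is an orthogonal projection and every row `q` of `Q` has
`q ⬝ D q = P_qq ≤ 7`. The diagonal of `C₀` is at most `3`, so the entries of `Q` lie in
`{-1, 0, 1}`, and among the `3⁶` such vectors those with `q ⬝ D q ≤ 7` all vanish in
coordinate `1`. Hence column `1` of `Q` is zero, contradicting `C₀ 1 1 = 2`.
-/

open Matrix

/-- The explicit 6×6 integer matrix (a modified E₆ Gram matrix). -/
def C0' : Matrix (Fin 6) (Fin 6) ℤ :=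
  !![3, 0, 1, 0, 0, 0;
     0, 2, 0, 1, 0, 0;
     1, 0, 2, 1, 0, 0;
     0, 1, 1, 2, 1, 0;
     0, 0, 0, 1, 2, 1;
     0, 0, 0, 0, 1, 2]

namespace Matrix

variable {m n R : Type*}

theorem sq_apply_le_transpose_mul_self_apply [Fintype m] [CommRing R] [LinearOrder R]
    [IsStrictOrderedRing R] (Q : Matrix m n R) (i : m) (j : n) :
    Q i j ^ 2 ≤ (Qᵀ * Q) j j := by
  simp only [mul_apply, transpose_apply, ← sq]
  exact Finset.single_le_sum (fun t _ => sq_nonneg (Q t j)) (Finset.mem_univ i)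

theorem apply_self_le_of_mul_self_eq_smul [Fintype n] [CommRing R] [LinearOrder R]
    [IsStrictOrderedRing R] {P : Matrix n n R} {c : R} (hP : P.IsSymm) (hc : 0 ≤ c)
    (hPP : P * P = c • P) (i : n) : P i i ≤ c := by
  have h : P i i ^ 2 ≤ c * P i i :=
    calc P i i ^ 2 ≤ (Pᵀ * P) i i := sq_apply_le_transpose_mul_self_apply P i i
      _ = c * P i i := by rw [hP.eq, hPP, smul_apply, smul_eq_mul]
  nlinarith

theorem isSymm_mul_mul_transpose [Fintype n] [CommSemiring R] (Q : Matrix m n R)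
    {D : Matrix n n R} (hD : D.IsSymm) : (Q * D * Qᵀ).IsSymm := by
  rw [IsSymm, transpose_mul, transpose_mul, transpose_transpose, hD.eq, Matrix.mul_assoc]

theorem mul_mul_transpose_mul_self [Fintype m] [Fintype n] [DecidableEq n] [CommRing R]
    {Q : Matrix m n R} {D : Matrix n n R} {c : R} (hD : D * (Qᵀ * Q) = c • 1) :
    Q * D * Qᵀ * (Q * D * Qᵀ) = c • (Q * D * Qᵀ) :=
  calc Q * D * Qᵀ * (Q * D * Qᵀ) = Q * (D * (Qᵀ * Q)) * D * Qᵀ := by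
        simp only [Matrix.mul_assoc]
    _ = c • (Q * D * Qᵀ) := by
        rw [hD, Matrix.mul_smul, Matrix.mul_one, Matrix.smul_mul, Matrix.smul_mul]

theorem mul_mul_transpose_apply_self [Fintype n] [CommSemiring R] (Q : Matrix m n R)
    (D : Matrix n n R) (i : m) : (Q * D * Qᵀ) i i = Q i ⬝ᵥ D *ᵥ Q i := by
  rw [dotProduct_mulVec]
  simp only [mul_apply, transpose_apply, vecMul, dotProduct]

theorem dotProduct_mulVec_row_le [Fintype m] [Fintype n] [DecidableEq n] [CommRing R]
    [LinearOrder R] [IsStrictOrderedRing R] {Q : Matrix m n R} {D : Matrix n n R} {c : R}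
    (hDsymm : D.IsSymm) (hc : 0 ≤ c) (hD : D * (Qᵀ * Q) = c • 1) (i : m) :
    Q i ⬝ᵥ D *ᵥ Q i ≤ c := by
  rw [← mul_mul_transpose_apply_self]
  exact apply_self_le_of_mul_self_eq_smul (isSymm_mul_mul_transpose Q hDsymm) hc
    (mul_mul_transpose_mul_self hD) i

end Matrix

def adjC0 : Matrix (Fin 6) (Fin 6) ℤ :=
  !![4, -3, -5, 6, -4, 2;
     -3, 11, 9, -15, 10, -5;
     -5, 9, 15, -18, 12, -6;
     6, -15, -18, 30, -20, 10;
     -4, 10, 12, -20, 18, -9;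
     2, -5, -6, 10, -9, 8]

theorem adjC0_mul_C0' : adjC0 * C0' = (7 : ℤ) • 1 := by decide

theorem isSymm_adjC0 : adjC0.IsSymm := by decide

theorem C0'_apply_self_le_three : ∀ j, C0' j j ≤ 3 := by decide

set_option maxRecDepth 100000 in
theorem apply_one_eq_zero_of_dotProduct_adjC0_mulVec_le :
    ∀ q ∈ Fintype.piFinset fun _ : Fin 6 => Finset.Icc (-1 : ℤ) 1,
      q ⬝ᵥ adjC0 *ᵥ q ≤ 7 → q 1 = 0 := by
  decide

theorem abs_apply_le_one_of_transpose_mul_self_eq_C0' {k : ℕ} {Q : Matrix (Fin k) (Fin 6) ℤ}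
    (hQ : Qᵀ * Q = C0') (i : Fin k) (j : Fin 6) : |Q i j| ≤ 1 := by
  have h : |Q i j| ^ 2 ≤ 3 :=
    calc |Q i j| ^ 2 = Q i j ^ 2 := sq_abs _
      _ ≤ (Qᵀ * Q) j j := sq_apply_le_transpose_mul_self_apply Q i j
      _ ≤ 3 := hQ ▸ C0'_apply_self_le_three j
  nlinarith [abs_nonneg (Q i j)]

/-- C₀ admits no factorization C₀ = QᵀQ with Q an integer matrix. -/
theorem stmt11 :
    ¬ ∃ (k : ℕ) (Q : Matrix (Fin k) (Fin 6) ℤ), Qᵀ * Q = C0' := by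
  rintro ⟨k, Q, hQ⟩
  have hrow : ∀ i, Q i 1 = 0 := fun i =>
    apply_one_eq_zero_of_dotProduct_adjC0_mulVec_le (Q i)
      (Fintype.mem_piFinset.2 fun j => Finset.mem_Icc.2 <|
        abs_le.1 (abs_apply_le_one_of_transpose_mul_self_eq_C0' hQ i j))
      (dotProduct_mulVec_row_le isSymm_adjC0 (by norm_num) (hQ ▸ adjC0_mul_C0') i)
  have h11 : (Qᵀ * Q) 1 1 = 0 := by simp [mul_apply, hrow]
  rw [hQ] at h11
  exact absurd h11 (by decide)
end

section
/- Let ζ be a primitive 5ⁿ-th root of unity. The elements 1, ζ + ζ⁻¹, ζ² + ζ⁻², …, ζ^{2·5^{n−1}−1} + ζ^{−(2·5^{n−1}−1)} form a ℤ-basis of the ring of integers of the maximal real subfield ℚ(ζ + ζ⁻¹) of ℚ(ζ). -/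
/-!
Let `ζ` be a primitive `k`-th root of unity, `k > 2`, and `α = ζ + ζ⁻¹`. Since `ζ² = αζ - 1`, the
ring of integers `ℤ[ζ]` of `ℚ(ζ)` equals `ℤ[α] + ζ ℤ[α]`. An integer `a + ζ b` of the real field
`ℚ(α)` with `b ≠ 0` would put `ζ` into `ℚ(α)`, so the integers of `ℚ(α)` are exactly `ℤ[α]`.
As `[ℚ(ζ) : ℚ(α)] = 2`, the minimal polynomial of `α` has degree `m = φ(k)/2`, so
`1, α, …, α^(m-1)` is a `ℤ`-basis of `ℤ[α]`. Finally `ζʲ + ζ⁻ʲ = Dⱼ(α)` for the monic Dickson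
polynomial `Dⱼ` of degree `j`, a unitriangular change of basis.
-/

/-- The maximal real subfield ℚ(ζ + ζ⁻¹) of ℚ(ζ), as an intermediate field of ℂ/ℚ. -/
noncomputable def realSub (ζ : ℂ) : IntermediateField ℚ ℂ :=
  IntermediateField.adjoin ℚ {ζ + ζ⁻¹}

open Polynomial IntermediateField ComplexConjugate

namespace Polynomial

variable {R : Type*} [CommRing R]

theorem natDegree_dickson_one_one_le_and_monic [Nontrivial R] (n : ℕ) :
    (dickson 1 (1 : R) n).natDegree ≤ n ∧ (dickson 1 (1 : R) (n + 1)).Monic ∧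
      (dickson 1 (1 : R) (n + 1)).natDegree = n + 1 := by
  induction n with
  | zero =>
    refine ⟨?_, monic_X, natDegree_X⟩
    rw [dickson_zero, Nat.cast_one, ← C_ofNat, ← C_1, ← C_sub, natDegree_C]
  | succ n ih =>
    obtain ⟨hle, hmonic, hdeg⟩ := ih
    have hXdeg : (X * dickson 1 (1 : R) (n + 1)).natDegree = n + 2 := by
      rw [monic_X.natDegree_mul hmonic, hdeg, natDegree_X]; ring
    have hlt : (dickson 1 (1 : R) n).natDegree < (X * dickson 1 (1 : R) (n + 1)).natDegree := by
      omega
    rw [dickson_add_two, C_1, one_mul]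
    exact ⟨hdeg.le, (monic_X.mul hmonic).sub_of_left (degree_lt_degree hlt),
      by rw [natDegree_sub_eq_left_of_natDegree_lt hlt, hXdeg]⟩

/-- Dickson polynomials, `Dⱼ(x + x⁻¹) = xʲ + x⁻ʲ`, with `D₀ = 2` replaced by `1`. -/
noncomputable def dicksonSeq (R : Type*) [CommRing R] [Nontrivial R] : Sequence R where
  elems' j := if j = 0 then 1 else dickson 1 1 j
  degree_eq' j := by
    split_ifs with hj
    · rw [hj, degree_one, Nat.cast_zero]
    · obtain ⟨n, rfl⟩ := Nat.exists_eq_succ_of_ne_zero hj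
      obtain ⟨-, hmonic, hdeg⟩ := natDegree_dickson_one_one_le_and_monic (R := R) n
      rw [degree_eq_natDegree hmonic.ne_zero, hdeg]

theorem monic_dicksonSeq [Nontrivial R] (j : ℕ) : (dicksonSeq R j).Monic := by
  show (if j = 0 then 1 else dickson 1 1 j).Monic
  split_ifs with hj
  · exact monic_one
  · obtain ⟨n, rfl⟩ := Nat.exists_eq_succ_of_ne_zero hj
    exact (natDegree_dickson_one_one_le_and_monic n).2.1

theorem aeval_dicksonSeq [Nontrivial R] {A : Type*} [CommRing A] [Algebra R A] {x y : A}
    (hxy : x * y = 1) (j : ℕ) :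
    aeval (x + y) (dicksonSeq R j) = if j = 0 then 1 else x ^ j + y ^ j := by
  show aeval (x + y) (if j = 0 then 1 else dickson 1 1 j) = _
  split_ifs
  · exact map_one _
  · rw [aeval_def, eval₂_eq_eval_map, map_dickson, map_one, dickson_one_one_eval_add_inv x y hxy]

variable {A : Type*} [CommRing A] [Algebra R A] {x : A}

theorem map_aeval_degreeLT_minpoly [Nontrivial R] (hx : IsIntegral R x) :
    (degreeLT R (minpoly R x).natDegree).map (aeval x).toLinearMap =
      Subalgebra.toSubmodule (Algebra.adjoin R {x}) := by
  apply le_antisymm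
  · rintro _ ⟨p, -, rfl⟩
    exact aeval_mem_adjoin_singleton R x
  · intro y hy
    rw [Subalgebra.mem_toSubmodule, Algebra.adjoin_singleton_eq_range_aeval] at hy
    obtain ⟨p, rfl⟩ := hy
    refine ⟨p %ₘ minpoly R x, ?_, aeval_modByMonic_eq_self_of_root (minpoly.aeval R x)⟩
    rw [SetLike.mem_coe, mem_degreeLT, ← degree_eq_natDegree (minpoly.ne_zero hx)]
    exact degree_modByMonic_lt p (minpoly.monic hx)

namespace Sequence

variable (S : Sequence R)

theorem span_aeval_eq_adjoin [Nontrivial R] (hS : ∀ i, IsUnit (S i).leadingCoeff)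
    (hx : IsIntegral R x) :
    Submodule.span R (Set.range fun i : Fin (minpoly R x).natDegree => aeval x (S i)) =
      Subalgebra.toSubmodule (Algebra.adjoin R {x}) := by
  rw [← map_aeval_degreeLT_minpoly hx, ← S.span_degreeLT fun i _ => hS i, ← Submodule.span_image,
    ← Fin.range_val, ← Set.range_comp, ← Set.range_comp]
  rfl

theorem linearIndependent_aeval [IsDomain R] [IsIntegrallyClosed R] [IsDomain A]
    [Module.IsTorsionFree R A] (hS : ∀ i, IsUnit (S i).leadingCoeff) (hx : IsIntegral R x) :
    LinearIndependent R fun i : Fin (minpoly R x).natDegree => aeval x (S i) := by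
  refine (S.linearIndependent.comp _ Fin.val_injective).map (f := (aeval x).toLinearMap) ?_
  rw [Set.range_comp, Fin.range_val, S.span_degreeLT fun i _ => hS i, Submodule.disjoint_def]
  intro p hp hpx
  rw [mem_degreeLT, ← degree_eq_natDegree (minpoly.ne_zero hx)] at hp
  exact eq_zero_of_dvd_of_degree_lt (minpoly.isIntegrallyClosed_dvd hx hpx) hp

end Sequence

end Polynomial

theorem Module.Basis.exists_map_eq_of_range_eq_span {ι R M N : Type*} [Semiring R]
    [AddCommMonoid M] [AddCommMonoid N] [Module R M] [Module R N] {f : M →ₗ[R] N}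
    (hf : Function.Injective f) {v : ι → N} (hv : LinearIndependent R v)
    (hrange : LinearMap.range f = Submodule.span R (Set.range v)) :
    ∃ B : Module.Basis ι R M, ∀ i, f (B i) = v i := by
  let e : M ≃ₗ[R] Submodule.span R (Set.range v) :=
    (LinearEquiv.ofInjective f hf).trans (LinearEquiv.ofEq _ _ hrange)
  refine ⟨(Module.Basis.span hv).map e.symm, fun i => ?_⟩
  have he : ∀ x, (e x : N) = f x := fun _ => rfl
  rw [Module.Basis.map_apply, ← he, e.apply_symm_apply, Module.Basis.span_apply]

theorem Algebra.exists_eq_add_mul_of_mem_adjoin {R K : Type*} [CommRing R] [Field K]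
    [Algebra R K] {ζ : K} (hζ : ζ ≠ 0) {x : K} (hx : x ∈ Algebra.adjoin R {ζ}) :
    ∃ a ∈ Algebra.adjoin R {ζ + ζ⁻¹}, ∃ b ∈ Algebra.adjoin R {ζ + ζ⁻¹}, x = a + ζ * b := by
  have hα : ζ + ζ⁻¹ ∈ Algebra.adjoin R {ζ + ζ⁻¹} := Algebra.self_mem_adjoin_singleton R _
  induction hx using Algebra.adjoin_induction with
  | mem z hz =>
    rw [Set.mem_singleton_iff.mp hz]
    exact ⟨0, zero_mem _, 1, one_mem _, by ring⟩
  | algebraMap r => exact ⟨algebraMap R K r, Subalgebra.algebraMap_mem _ r, 0, zero_mem _, by ring⟩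
  | add x y _ _ hx hy =>
    obtain ⟨a, ha, b, hb, rfl⟩ := hx
    obtain ⟨c, hc, d, hd, rfl⟩ := hy
    exact ⟨a + c, add_mem ha hc, b + d, add_mem hb hd, by ring⟩
  | mul x y _ _ hx hy =>
    obtain ⟨a, ha, b, hb, rfl⟩ := hx
    obtain ⟨c, hc, d, hd, rfl⟩ := hy
    -- `ζ² = (ζ + ζ⁻¹) ζ - 1`
    refine ⟨a * c - b * d, sub_mem (mul_mem ha hc) (mul_mem hb hd),
      a * d + b * c + (ζ + ζ⁻¹) * (b * d),
      add_mem (add_mem (mul_mem ha hd) (mul_mem hb hc)) (mul_mem hα (mul_mem hb hd)), ?_⟩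
    field_simp
    ring

theorem realSub_le_adjoin (ζ : ℂ) : realSub ζ ≤ ℚ⟮ζ⟯ := by
  rw [realSub, adjoin_simple_le_iff]
  exact add_mem (mem_adjoin_simple_self ℚ ζ) (inv_mem (mem_adjoin_simple_self ℚ ζ))

theorem mem_realSub_of_mem_adjoin {ζ x : ℂ} (hx : x ∈ Algebra.adjoin ℤ {ζ + ζ⁻¹}) :
    x ∈ realSub ζ :=
  Algebra.adjoin_le (R := ℤ) (S := (realSub ζ).toSubalgebra.restrictScalars ℤ)
    (Set.singleton_subset_iff.mpr (mem_adjoin_simple_self ℚ _)) hx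

namespace IsPrimitiveRoot

variable {k : ℕ} {ζ : ℂ}

theorem conj_eq_self_of_mem_realSub (hζ : IsPrimitiveRoot ζ k) (hk : k ≠ 0) {x : ℂ}
    (hx : x ∈ realSub ζ) : conj x = x := by
  have hconj : conj ζ = ζ⁻¹ := (Complex.inv_eq_conj (hζ.norm'_eq_one hk)).symm
  have hle : realSub ζ ≤ (Complex.ofRealAm.restrictScalars ℚ).fieldRange := by
    rw [realSub, adjoin_simple_le_iff, AlgHom.mem_fieldRange]
    obtain ⟨r, hr⟩ := Complex.conj_eq_iff_real.mp
      (by rw [map_add, map_inv₀, hconj, inv_inv, add_comm] : conj (ζ + ζ⁻¹) = ζ + ζ⁻¹)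
    exact ⟨r, hr.symm⟩
  obtain ⟨r, rfl⟩ := AlgHom.mem_fieldRange.mp (hle hx)
  exact Complex.conj_ofReal r

theorem notMem_realSub (hζ : IsPrimitiveRoot ζ k) (hk : 2 < k) : ζ ∉ realSub ζ := by
  intro h
  have hsq : ζ ^ 2 = 1 := by
    have := hζ.conj_eq_self_of_mem_realSub (by omega) h
    rw [← Complex.inv_eq_conj (hζ.norm'_eq_one (by omega))] at this
    rw [sq]; nth_rw 1 [← this]; exact inv_mul_cancel₀ (hζ.ne_zero (by omega))
  exact absurd (Nat.le_of_dvd two_pos (hζ.dvd_of_pow_eq_one 2 hsq)) (by omega)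

theorem finrank_adjoin (hζ : IsPrimitiveRoot ζ k) (hk : k ≠ 0) :
    Module.finrank ℚ ℚ⟮ζ⟯ = k.totient := by
  rw [adjoin.finrank (hζ.isIntegral (Nat.pos_of_ne_zero hk)).tower_top,
    ← cyclotomic_eq_minpoly_rat hζ (Nat.pos_of_ne_zero hk), natDegree_cyclotomic]

theorem finrank_realSub_adjoin (hζ : IsPrimitiveRoot ζ k) (hk : 2 < k) :
    Module.finrank (realSub ζ) (realSub ζ)⟮ζ⟯ = 2 := by
  have hint : IsIntegral (realSub ζ) ζ := (hζ.isIntegral (by omega)).tower_top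
  let α : realSub ζ := ⟨ζ + ζ⁻¹, mem_adjoin_simple_self ℚ _⟩
  have hroot : aeval ζ (X ^ 2 - C α * X + 1) = 0 := by
    have : algebraMap (realSub ζ) ℂ α = ζ + ζ⁻¹ := rfl
    simp only [map_add, map_sub, map_mul, map_pow, aeval_X, aeval_C, map_one, this]
    field_simp [hζ.ne_zero (by omega)]
    ring
  have hle : Module.finrank (realSub ζ) (realSub ζ)⟮ζ⟯ ≤ 2 := by
    have hmonic : (X ^ 2 - C α * X + 1).Monic := by monicity!
    have hdeg : (X ^ 2 - C α * X + 1).natDegree = 2 := by compute_degree!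
    rw [adjoin.finrank hint, ← hdeg]
    exact natDegree_le_of_dvd (minpoly.dvd _ _ hroot) hmonic.ne_zero
  have hne : Module.finrank (realSub ζ) (realSub ζ)⟮ζ⟯ ≠ 1 := by
    rw [Ne, IntermediateField.finrank_eq_one_iff, adjoin_simple_eq_bot_iff, mem_bot]
    rintro ⟨x, hx⟩
    exact hζ.notMem_realSub hk (by convert x.2; exact hx.symm)
  have hpos : 0 < Module.finrank (realSub ζ) (realSub ζ)⟮ζ⟯ := by
    rw [adjoin.finrank hint]
    exact minpoly.natDegree_pos hint
  omega

theorem isIntegral_add_inv (hζ : IsPrimitiveRoot ζ k) (hk : k ≠ 0) : IsIntegral ℤ (ζ + ζ⁻¹) :=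
  (hζ.isIntegral (Nat.pos_of_ne_zero hk)).add (hζ.inv.isIntegral (Nat.pos_of_ne_zero hk))

theorem two_mul_finrank_realSub (hζ : IsPrimitiveRoot ζ k) (hk : 2 < k) :
    2 * Module.finrank ℚ (realSub ζ) = k.totient := by
  have : FiniteDimensional ℚ (realSub ζ) :=
    adjoin.finiteDimensional (hζ.isIntegral_add_inv (by omega)).tower_top
  have htop : (realSub ζ)⟮ζ⟯.restrictScalars ℚ = ℚ⟮ζ⟯ :=
    (restrictScalars_adjoin_eq_sup ℚ _ _).trans (sup_eq_right.mpr (realSub_le_adjoin ζ))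
  rw [← hζ.finrank_adjoin (by omega), ← htop, ← hζ.finrank_realSub_adjoin hk, mul_comm]
  exact Module.finrank_mul_finrank ℚ (realSub ζ) (realSub ζ)⟮ζ⟯

theorem two_mul_natDegree_minpoly_add_inv (hζ : IsPrimitiveRoot ζ k) (hk : 2 < k) :
    2 * (minpoly ℤ (ζ + ζ⁻¹)).natDegree = k.totient := by
  have hα := hζ.isIntegral_add_inv (by omega)
  rw [← (minpoly.monic hα).natDegree_map (algebraMap ℤ ℚ),
    ← minpoly.isIntegrallyClosed_eq_field_fractions' ℚ hα, ← adjoin.finrank hα.tower_top]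
  exact hζ.two_mul_finrank_realSub hk

theorem isCyclotomicExtension_adjoin [NeZero k] (hζ : IsPrimitiveRoot ζ k) :
    IsCyclotomicExtension {k} ℚ ℚ⟮ζ⟯ :=
  have := hζ.adjoin_isCyclotomicExtension ℚ
  IsCyclotomicExtension.equiv _ _ _ (Subalgebra.equivOfEq _ _
    (adjoin_simple_toSubalgebra_of_isAlgebraic
      (hζ.isIntegral (NeZero.pos k)).tower_top.isAlgebraic).symm)

theorem mem_adjoin_of_isIntegral [NeZero k] (hζ : IsPrimitiveRoot ζ k) {x : ℂ} (hxK : x ∈ ℚ⟮ζ⟯)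
    (hx : IsIntegral ℤ x) : x ∈ Algebra.adjoin ℤ {ζ} := by
  have := hζ.isCyclotomicExtension_adjoin
  let ζ' : ℚ⟮ζ⟯ := ⟨ζ, mem_adjoin_simple_self ℚ ζ⟩
  have := IsCyclotomicExtension.Rat.isIntegralClosure_adjoin_singleton
    (coe_submonoidClass_iff.mp hζ : IsPrimitiveRoot ζ' k)
  obtain ⟨y, hy⟩ := (IsIntegralClosure.isIntegral_iff (A := Algebra.adjoin ℤ {ζ'})).mp
    ((isIntegral_algebraMap_iff Subtype.val_injective).mp hx : IsIntegral ℤ (⟨x, hxK⟩ : ℚ⟮ζ⟯))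
  rw [← show (Algebra.adjoin ℤ {ζ'}).map (ℚ⟮ζ⟯.val.restrictScalars ℤ) = Algebra.adjoin ℤ {ζ} from
    AlgHom.map_adjoin_singleton _ ζ']
  exact ⟨y, y.2, congrArg Subtype.val hy⟩

theorem mem_adjoin_add_inv_of_mem_realSub (hζ : IsPrimitiveRoot ζ k) (hk : 2 < k) {x : ℂ}
    (hxF : x ∈ realSub ζ) (hx : IsIntegral ℤ x) : x ∈ Algebra.adjoin ℤ {ζ + ζ⁻¹} := by
  have : NeZero k := ⟨by omega⟩
  have hζ0 : ζ ≠ 0 := hζ.ne_zero (by omega)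
  obtain ⟨a, ha, b, hb, rfl⟩ := Algebra.exists_eq_add_mul_of_mem_adjoin hζ0
    (hζ.mem_adjoin_of_isIntegral (realSub_le_adjoin ζ hxF) hx)
  obtain rfl : b = 0 := by
    by_contra hb0
    have hζb : (a + ζ * b - a) / b = ζ := by rw [add_sub_cancel_left, mul_div_cancel_right₀ _ hb0]
    have hmem : (a + ζ * b - a) / b ∈ realSub ζ :=
      div_mem (sub_mem hxF (mem_realSub_of_mem_adjoin ha)) (mem_realSub_of_mem_adjoin hb)
    rw [hζb] at hmem
    exact hζ.notMem_realSub hk hmem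
  simpa using ha

theorem range_integralClosure_realSub (hζ : IsPrimitiveRoot ζ k) (hk : 2 < k) :
    (((realSub ζ).val.restrictScalars ℤ).comp (integralClosure ℤ (realSub ζ)).val).range =
      Algebra.adjoin ℤ {ζ + ζ⁻¹} := by
  ext x
  constructor
  · rintro ⟨y, rfl⟩
    exact hζ.mem_adjoin_add_inv_of_mem_realSub hk (y : realSub ζ).2
      ((isIntegral_algebraMap_iff (A := realSub ζ) Subtype.val_injective).mpr y.2)
  · intro hx
    have hint : IsIntegral ℤ x :=
      adjoin_le_integralClosure (hζ.isIntegral_add_inv (by omega)) hx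
    exact ⟨⟨⟨x, mem_realSub_of_mem_adjoin hx⟩,
      (isIntegral_algebraMap_iff Subtype.val_injective).mp hint⟩, rfl⟩

theorem exists_basis_integralClosure_realSub (hζ : IsPrimitiveRoot ζ k) (hk : 2 < k) {m : ℕ}
    (hm : 2 * m = k.totient) :
    ∃ B : Module.Basis (Fin m) ℤ (integralClosure ℤ (realSub ζ)), ∀ i : Fin m,
      ((B i : realSub ζ) : ℂ) = if (i : ℕ) = 0 then 1 else ζ ^ (i : ℕ) + (ζ ^ (i : ℕ))⁻¹ := by
  have hα := hζ.isIntegral_add_inv (by omega)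
  obtain rfl : (minpoly ℤ (ζ + ζ⁻¹)).natDegree = m := by
    have := hζ.two_mul_natDegree_minpoly_add_inv hk
    omega
  have hS : ∀ i, IsUnit (dicksonSeq ℤ i).leadingCoeff := fun i => by
    rw [(monic_dicksonSeq i).leadingCoeff]; exact isUnit_one
  let ψ := ((realSub ζ).val.restrictScalars ℤ).comp (integralClosure ℤ (realSub ζ)).val
  obtain ⟨B, hB⟩ := Module.Basis.exists_map_eq_of_range_eq_span (f := ψ.toLinearMap)
    (fun _ _ h => Subtype.ext (Subtype.ext h)) ((dicksonSeq ℤ).linearIndependent_aeval hS hα)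
    (by rw [(dicksonSeq ℤ).span_aeval_eq_adjoin hS hα, ← hζ.range_integralClosure_realSub hk]; rfl)
  refine ⟨B, fun i => (hB i).trans ?_⟩
  rw [aeval_dicksonSeq (mul_inv_cancel₀ (hζ.ne_zero (by omega))), inv_pow]

end IsPrimitiveRoot

/-- For ζ a primitive 5ⁿ-th root of unity, the elements
1, ζ+ζ⁻¹, ζ²+ζ⁻², …, ζ^{2·5^{n−1}−1}+ζ^{−(2·5^{n−1}−1)} form a ℤ-basis of the
ring of integers of ℚ(ζ+ζ⁻¹). -/
theorem stmt13 (n : ℕ) (hn : 1 ≤ n) (ζ : ℂ) (hζ : IsPrimitiveRoot ζ (5 ^ n)) :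
    ∃ B : Module.Basis (Fin (2 * 5 ^ (n - 1))) ℤ (integralClosure ℤ (realSub ζ)),
      ∀ i : Fin (2 * 5 ^ (n - 1)),
        ((B i : realSub ζ) : ℂ) =
          if (i : ℕ) = 0 then 1 else ζ ^ (i : ℕ) + (ζ ^ (i : ℕ))⁻¹ := by
  have hk : 2 < 5 ^ n := lt_of_lt_of_le (by norm_num) (Nat.le_self_pow (by omega) 5)
  refine hζ.exists_basis_integralClosure_realSub hk ?_
  rw [Nat.totient_prime_pow Nat.prime_five (by omega)]
  omega
end

section
/- Let A be a finite abelian group acting coprimely and faithfully on a finite abelian p-group P (i.e., gcd(|A|, p) = 1). Then A has a regular orbit on P: there exists x ∈ P with C_A(x) = 1. -/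
/-!
Let `Ω` be the subgroup of elements `y` with `y ^ p = 1`, an `𝔽_p`-vector space on which `A` acts
semisimply by Maschke's theorem. Since `A` is abelian, the fixed space of any `a ∈ A` in `Ω` is
`A`-invariant, so `a` centralises every irreducible summand in which it fixes a nonzero vector.
Hence the sum of nonzero vectors, one from each summand of a decomposition of `Ω` into
irreducibles, is fixed only by elements centralising `Ω`. Finally, an automorphism `a` of
coprime order centralising `Ω` is trivial: if `a` fixes `x ^ p`, then `t = a x * x⁻¹` lies in
`Ω`, so `a ^ j x = x * t ^ j`, and `t ^ (orderOf a) = 1 = t ^ p` forces `t = 1`.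
-/

theorem exists_isAtom_disjoint_sup_eq {α : Type*} [Lattice α] [BoundedOrder α]
    [IsModularLattice α] [ComplementedLattice α] [IsAtomic α] {a : α} (ha : a ≠ ⊥) :
    ∃ s t, IsAtom s ∧ t < a ∧ Disjoint s t ∧ s ⊔ t = a := by
  obtain ⟨s, hs, hsa⟩ := (eq_bot_or_exists_atom_le a).resolve_left ha
  obtain ⟨u, hu⟩ := exists_isCompl s
  have hdisj : Disjoint s (u ⊓ a) := hu.disjoint.mono_right inf_le_left
  have hsup : s ⊔ u ⊓ a = a := by rw [← sup_inf_assoc_of_le u hsa, hu.sup_eq_top, top_inf_eq]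
  refine ⟨s, u ⊓ a, hs, inf_le_right.lt_of_ne fun h => hs.1 ?_, hdisj, hsup⟩
  exact hdisj.eq_bot_of_le (hsa.trans h.ge)

namespace Subrepresentation

variable {k G V : Type*} [Field k] [Group G] [AddCommGroup V] [Module k V]
  {ρ : Representation k G V}

instance : IsModularLattice (Subrepresentation ρ) :=
  ⟨fun {_} y {_} h => IsModularLattice.sup_inf_le_assoc_of_le (α := Submodule k V)
    y.toSubmodule h⟩

instance [FiniteDimensional k V] : WellFoundedLT (Subrepresentation ρ) :=
  (show StrictMono (toSubmodule : Subrepresentation ρ → Submodule k V) from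
    fun _ _ h => h).wellFoundedLT

theorem apply_eq_self_of_disjoint {S T : Subrepresentation ρ} (hST : Disjoint S T) {s t : V}
    (hs : s ∈ S) (ht : t ∈ T) {g : G} (h : ρ g (s + t) = s + t) : ρ g s = s ∧ ρ g t = t := by
  have hsub : ρ g s - s = t - ρ g t := by
    rw [map_add] at h
    rw [sub_eq_sub_iff_add_eq_add, h, add_comm]
  have hmem : ρ g s - s ∈ S ⊓ T :=
    ⟨S.toSubmodule.sub_mem (S.apply_mem_toSubmodule g hs) hs,
      hsub ▸ T.toSubmodule.sub_mem ht (T.apply_mem_toSubmodule g ht)⟩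
  rw [hST.eq_bot] at hmem
  have h0 : ρ g s - s = 0 := hmem
  exact ⟨sub_eq_zero.1 h0, (sub_eq_zero.1 (hsub ▸ h0)).symm⟩

variable (ρ) [IsMulCommutative G]

def fixedBy (g : G) : Subrepresentation ρ where
  toSubmodule := LinearMap.ker (ρ g - 1)
  apply_mem_toSubmodule h v hv := by
    simp only [LinearMap.mem_ker, LinearMap.sub_apply, Module.End.one_apply, sub_eq_zero] at hv ⊢
    rw [← Module.End.mul_apply, ← map_mul, mul_comm' g h, map_mul, Module.End.mul_apply, hv]

variable {ρ}

theorem mem_fixedBy {g : G} {v : V} : v ∈ fixedBy ρ g ↔ ρ g v = v := by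
  change v ∈ LinearMap.ker (ρ g - 1) ↔ _
  simp only [LinearMap.mem_ker, LinearMap.sub_apply, Module.End.one_apply, sub_eq_zero]

theorem le_fixedBy_of_isAtom {S : Subrepresentation ρ} (hS : IsAtom S) {v : V} (hv : v ∈ S)
    (hv0 : v ≠ 0) {g : G} (hg : ρ g v = v) : S ≤ fixedBy ρ g := by
  refine inf_eq_left.1 ((hS.le_iff.1 inf_le_left).resolve_left fun h => hv0 ?_)
  have : v ∈ S ⊓ fixedBy ρ g := ⟨hv, mem_fixedBy.2 hg⟩
  rw [h] at this
  exact this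

variable [Finite G] [NeZero (Nat.card G : k)] [FiniteDimensional k V]

theorem exists_mem_forall_le_fixedBy (σ : Subrepresentation ρ) :
    ∃ v ∈ σ, ∀ g, ρ g v = v → σ ≤ fixedBy ρ g := by
  induction σ using WellFoundedLT.induction with
  | _ σ ih =>
  rcases eq_or_ne σ ⊥ with rfl | hσ
  · exact ⟨0, zero_mem (⊥ : Subrepresentation ρ).toSubmodule, fun _ _ => bot_le⟩
  obtain ⟨S, T, hS, hTσ, hST, rfl⟩ := exists_isAtom_disjoint_sup_eq hσ
  obtain ⟨s, hs, hs0⟩ := S.toSubmodule.ne_bot_iff.1 fun h => hS.1 (toSubmodule_injective h)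
  obtain ⟨t, ht, htT⟩ := ih T hTσ
  refine ⟨s + t, Submodule.add_mem_sup hs ht, fun g hg => ?_⟩
  obtain ⟨hgs, hgt⟩ := apply_eq_self_of_disjoint hST hs ht hg
  exact sup_le (le_fixedBy_of_isAtom hS hs hs0 hgs) (htT g hgt)

end Subrepresentation

theorem Representation.exists_apply_eq_self_imp_eq_one {k G V : Type*} [Field k] [Group G]
    [IsMulCommutative G] [Finite G] [NeZero (Nat.card G : k)] [AddCommGroup V] [Module k V]
    [FiniteDimensional k V] (ρ : Representation k G V) :
    ∃ v, ∀ g, ρ g v = v → ρ g = 1 := by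
  obtain ⟨v, -, hv⟩ := Subrepresentation.exists_mem_forall_le_fixedBy (⊤ : Subrepresentation ρ)
  exact ⟨v, fun g hg => LinearMap.ext fun w =>
    Subrepresentation.mem_fixedBy.1 (hv g hg (Submodule.mem_top (x := w)))⟩

abbrev TorsionBy (P : Type*) [CommGroup P] (n : ℕ) := Additive (powMonoidHom n : P →* P).ker

namespace TorsionBy

section

variable (P : Type*) [CommGroup P] (n : ℕ)

instance : Module (ZMod n) (TorsionBy P n) :=
  AddCommGroup.zmodModule fun x => Additive.toMul.injective (Subtype.ext x.toMul.2)

def rep : Representation (ZMod n) (MulAut P) (TorsionBy P n) where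
  toFun a := AddMonoidHom.toZModLinearMap n <| MonoidHom.toAdditive <|
    (a.toMonoidHom.domRestrict (powMonoidHom n : P →* P).ker).codRestrict
      (powMonoidHom n : P →* P).ker fun x =>
      show (a x) ^ n = 1 by rw [← map_pow, show (x : P) ^ n = 1 from x.2, map_one]
  map_one' := rfl
  map_mul' _ _ := rfl

end

variable {P : Type*} [CommGroup P] {n : ℕ} {a : MulAut P}

theorem coe_rep_apply (v : TorsionBy P n) : ((rep P n a v).toMul : P) = a v.toMul := rfl

theorem rep_apply_eq_self_iff {v : TorsionBy P n} : rep P n a v = v ↔ a v.toMul = v.toMul := by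
  rw [← coe_rep_apply, Subtype.coe_inj, EmbeddingLike.apply_eq_iff_eq]

theorem rep_eq_one_iff : rep P n a = 1 ↔ ∀ y : P, y ^ n = 1 → a y = y :=
  ⟨fun h y hy => (rep_apply_eq_self_iff (v := Additive.ofMul ⟨y, hy⟩)).1 (by rw [h]; rfl),
    fun h => LinearMap.ext fun v => rep_apply_eq_self_iff.2 (h _ v.toMul.2)⟩

end TorsionBy

section

variable {P : Type*} [CommGroup P]

theorem MulAut.pow_apply_eq_mul_pow {a : MulAut P} {x t : P} (hx : a x = x * t) (ht : a t = t)
    (j : ℕ) : (a ^ j) x = x * t ^ j := by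
  induction j with
  | zero => simp
  | succ j ih =>
    rw [pow_succ', MulAut.mul_apply, ih, map_mul, hx, map_pow, ht, mul_assoc, ← pow_succ']

theorem MulAut.apply_eq_self_of_apply_pow_eq_self {n m : ℕ} {a : MulAut P} (hm : a ^ m = 1)
    (hmn : m.Coprime n) (ha : ∀ y : P, y ^ n = 1 → a y = y) {x : P} (hx : a (x ^ n) = x ^ n) :
    a x = x := by
  set t := a x * x⁻¹
  have hax : a x = x * t := by rw [mul_inv_cancel_comm_assoc]
  have htn : t ^ n = 1 := by rw [mul_pow, ← map_pow, hx, inv_pow, mul_inv_cancel]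
  have htm : t ^ m = 1 := by
    simpa [hm] using (MulAut.pow_apply_eq_mul_pow hax (ha t htn) m).symm
  rw [hax, (pow_eq_one_iff_of_coprime hmn).1 ⟨htm, htn⟩, mul_one]

theorem IsPGroup.mulAut_eq_one {p m : ℕ} (hP : IsPGroup p P) {a : MulAut P} (hm : a ^ m = 1)
    (hmp : m.Coprime p) (ha : ∀ y : P, y ^ p = 1 → a y = y) : a = 1 := by
  suffices ∀ x, a x = x from MulEquiv.ext this
  intro x
  obtain ⟨k, hk⟩ := hP x
  induction k generalizing x with
  | zero => rw [pow_zero, pow_one] at hk; rw [hk, map_one]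
  | succ k ih =>
    refine MulAut.apply_eq_self_of_apply_pow_eq_self hm hmp ha (ih _ ?_)
    rwa [← pow_mul, ← pow_succ']

end

/-- A finite abelian group A of automorphisms of a finite abelian
p-group P with |A| coprime to p has a regular orbit on P. -/
theorem stmt15 (p : ℕ) [Fact p.Prime] (P : Type*) [CommGroup P] [Fintype P]
    (hp : IsPGroup p P) (A : Subgroup (MulAut P))
    (hab : ∀ a ∈ A, ∀ b ∈ A, a * b = b * a)
    (hA : Nat.Coprime (Nat.card A) p) :
    ∃ x : P, ∀ a ∈ A, a x = x → a = 1 := by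
  have : IsMulCommutative A := ⟨⟨fun a b => Subtype.ext (hab _ a.2 _ b.2)⟩⟩
  have : NeZero (Nat.card A : ZMod p) :=
    ⟨(ZMod.natCast_eq_zero_iff _ _).not.2 ((Nat.Prime.coprime_iff_not_dvd Fact.out).1 hA.symm)⟩
  have : FiniteDimensional (ZMod p) (TorsionBy P p) := Module.Finite.of_finite
  obtain ⟨v, hv⟩ :=
    Representation.exists_apply_eq_self_imp_eq_one ((TorsionBy.rep P p).comp A.subtype)
  refine ⟨v.toMul, fun a ha hav => hp.mulAut_eq_one ?_ hA ?_⟩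
  · exact congrArg Subtype.val (pow_card_eq_one' (x := (⟨a, ha⟩ : A)))
  · exact TorsionBy.rep_eq_one_iff.1 (hv ⟨a, ha⟩ (TorsionBy.rep_apply_eq_self_iff.2 hav))
end

section
/- Let P be a finite abelian p-group and A ≤ Aut(P) a p'-group acting indecomposably on P (P has no nontrivial A-invariant direct decomposition). Then P is homocyclic, i.e., isomorphic to a direct product of cyclic groups of the same order. -/
/-!
Write `P` additively as `⨁ᵢ ℤ/p^{eᵢ}` and let `p^m` be its exponent. If `P` is not homocyclic,
the projection `π` onto the factors of order `p^m` is the identity on `p^{m-1}P` and maps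
`Ω₁(P)` into `p^{m-1}P`, although `Ω₁(P) ⊄ p^{m-1}P`. Averaging the conjugates of `π` over the
`p'`-group `A` gives an `A`-endomorphism `f` with the same two properties. Such an `f` cannot be
injective (it would then be bijective and force `Ω₁(P) ≤ p^{m-1}P`), yet it fixes `p^{m-1}P ≠ 0`
pointwise, so the Fitting decomposition `P = ker fⁿ ⊕ im fⁿ` is a nontrivial `A`-invariant one.
-/

open LinearMap

namespace Module.End

variable {R M : Type*} [Ring R] [AddCommGroup M] [Module R M] {f g : End R M}

lemma ker_mem_invtSubmodule_of_commute (h : Commute f g) : ker f ∈ g.invtSubmodule :=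
  fun x (hx : f x = 0) ↦ show f (g x) = 0 by rw [← mul_apply, h.eq, mul_apply, hx, map_zero]

lemma range_mem_invtSubmodule_of_commute (h : Commute f g) : range f ∈ g.invtSubmodule := by
  rintro _ ⟨x, rfl⟩
  exact ⟨g x, by rw [← mul_apply, h.eq, mul_apply]⟩

lemma ker_le_of_bijective_of_commute {N : Submodule R M} (hf : Function.Bijective f)
    (hfg : Commute f g) (hN : ∀ x ∈ ker g, f x ∈ N) : ker g ≤ N := by
  intro w hw
  obtain ⟨y, rfl⟩ := hf.2 w
  refine hN y (hf.1 ?_)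
  rw [map_zero, ← mul_apply, hfg.eq, mul_apply, hw]

lemma exists_isCompl_ker_pow_range_pow_ne_bot [IsArtinian R M] [IsNoetherian R M]
    (hf : ¬ Function.Injective f) {x : M} (hx : x ≠ 0) (hfx : f x = x) :
    ∃ n, IsCompl (ker (f ^ n)) (range (f ^ n)) ∧ ker (f ^ n) ≠ ⊥ ∧ range (f ^ n) ≠ ⊥ := by
  obtain ⟨n, hn⟩ := (f.eventually_isCompl_ker_pow_range_pow.and
    (Filter.eventually_ge_atTop 1)).exists
  refine ⟨n, hn.1, fun h ↦ hf ?_, ?_⟩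
  · obtain ⟨m, rfl⟩ := Nat.exists_eq_add_of_le' hn.2
    have := LinearMap.ker_eq_bot.1 h
    rw [Module.End.coe_pow, Function.iterate_succ] at this
    exact this.of_comp
  · refine (Submodule.ne_bot_iff _).2 ⟨x, ⟨x, ?_⟩, hx⟩
    rw [Module.End.coe_pow, Function.iterate_fixed hfx]

end Module.End

namespace Representation

variable {k G V : Type*} [CommRing k] [Group G] [Fintype G] [Invertible (Fintype.card G : k)]
  [AddCommGroup V] [Module k V] (ρ : Representation k G V) (π : Module.End k V)

lemma averageMap_linHom_apply (v : V) :
    averageMap (linHom ρ ρ) π v = ⅟(Fintype.card G : k) • ∑ g, ρ g (π (ρ g⁻¹ v)) := by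
  simp [GroupAlgebra.average, map_sum, linHom_apply]

lemma commute_averageMap_linHom (g : G) : Commute (ρ g) (averageMap (linHom ρ ρ) π) := by
  ext v
  simpa using congr($(averageMap_invariant (linHom ρ ρ) π g) (ρ g v))

variable {ρ π} {N K : Submodule k V}

lemma averageMap_linHom_apply_of_mem (hN : N ∈ ρ.invtSubmodule) (hπ : ∀ x ∈ N, π x = x)
    {x : V} (hx : x ∈ N) : averageMap (linHom ρ ρ) π x = x := by
  have hterm : ∀ g, ρ g (π (ρ g⁻¹ x)) = x := fun g ↦ by
    rw [hπ _ ((ρ.mem_invtSubmodule.1 hN g⁻¹) hx), ← Module.End.mul_apply, ← map_mul,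
      mul_inv_cancel, map_one, Module.End.one_apply]
  rw [averageMap_linHom_apply]
  simp only [hterm, Finset.sum_const, Finset.card_univ, ← Nat.cast_smul_eq_nsmul k, smul_smul,
    invOf_mul_self, one_smul]

lemma averageMap_linHom_mem (hK : K ∈ ρ.invtSubmodule) (hN : N ∈ ρ.invtSubmodule)
    (hπ : ∀ x ∈ K, π x ∈ N) {x : V} (hx : x ∈ K) : averageMap (linHom ρ ρ) π x ∈ N := by
  rw [averageMap_linHom_apply]
  exact N.smul_mem _ (N.sum_mem fun g _ ↦
    (ρ.mem_invtSubmodule.1 hN g) (hπ _ ((ρ.mem_invtSubmodule.1 hK g⁻¹) hx)))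

variable [IsArtinian k V] [IsNoetherian k V] (ρ)

theorem exists_isCompl_mem_invtSubmodule_ne_bot {p q : ℕ}
    (hfix : ∀ x ∈ range (q : Module.End k V), π x = x)
    (hmaps : ∀ x ∈ ker (p : Module.End k V), π x ∈ range (q : Module.End k V))
    (hK : ¬ ker (p : Module.End k V) ≤ range (q : Module.End k V))
    (hN : range (q : Module.End k V) ≠ ⊥) :
    ∃ V₁ V₂ : Submodule k V, V₁ ≠ ⊥ ∧ V₂ ≠ ⊥ ∧ V₁ ∈ ρ.invtSubmodule ∧ V₂ ∈ ρ.invtSubmodule ∧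
      IsCompl V₁ V₂ := by
  set f := averageMap (linHom ρ ρ) π
  have hcomm (g : G) : Commute (ρ g) f := commute_averageMap_linHom ρ π g
  have hN_inv : range (q : Module.End k V) ∈ ρ.invtSubmodule := ρ.mem_invtSubmodule.2 fun g ↦
    Module.End.range_mem_invtSubmodule_of_commute (Nat.cast_commute q (ρ g))
  have hK_inv : ker (p : Module.End k V) ∈ ρ.invtSubmodule := ρ.mem_invtSubmodule.2 fun g ↦
    Module.End.ker_mem_invtSubmodule_of_commute (Nat.cast_commute p (ρ g))
  have hf_not_inj : ¬ Function.Injective f := fun hinj ↦ hK <|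
    Module.End.ker_le_of_bijective_of_commute
      (IsArtinian.bijective_of_injective_endomorphism f hinj) (Nat.cast_commute p f).symm
      fun _ hx ↦ averageMap_linHom_mem hK_inv hN_inv hmaps hx
  obtain ⟨x, hxN, hx0⟩ := (Submodule.ne_bot_iff _).1 hN
  obtain ⟨n, hcompl, hker, hrange⟩ := Module.End.exists_isCompl_ker_pow_range_pow_ne_bot
    hf_not_inj hx0 (averageMap_linHom_apply_of_mem hN_inv hfix hxN)
  refine ⟨range (f ^ n), ker (f ^ n), hrange, hker, ?_, ?_, hcompl.symm⟩ <;>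
    refine ρ.mem_invtSubmodule.2 fun g ↦ ?_
  · exact Module.End.range_mem_invtSubmodule_of_commute ((hcomm g).symm.pow_left n)
  · exact Module.End.ker_mem_invtSubmodule_of_commute ((hcomm g).symm.pow_left n)

end Representation

lemma exists_invariant_complementary_subgroups {P : Type*} [CommGroup P] [Finite P] {n : ℕ}
    [Module (ZMod n) (Additive P)] (A : Subgroup (MulAut P)) (hA : Nat.Coprime (Nat.card A) n)
    {p q : ℕ} (π : Additive P →+ Additive P) (hfix : ∀ x, π (q • x) = q • x)
    (hmaps : ∀ x, p • x = 0 → ∃ y, π x = q • y) {w : Additive P} (hw : p • w = 0)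
    (hwq : ∀ y, q • y ≠ w) {v : Additive P} (hv : q • v ≠ 0) :
    ∃ P₁ P₂ : Subgroup P, P₁ ≠ ⊥ ∧ P₂ ≠ ⊥ ∧
      (∀ a ∈ A, ∀ x ∈ P₁, a x ∈ P₁) ∧ (∀ a ∈ A, ∀ x ∈ P₂, a x ∈ P₂) ∧
      P₁ ⊓ P₂ = ⊥ ∧ P₁ ⊔ P₂ = ⊤ := by
  have : IsArtinian (ZMod n) (Additive P) := isArtinian_of_finite
  have : Fintype A := Fintype.ofFinite A
  let : Invertible (Fintype.card A : ZMod n) :=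
    invertibleOfCoprime (by rwa [Fintype.card_eq_nat_card])
  let ρ : Representation (ZMod n) A (Additive P) :=
    { toFun a := (MulEquiv.toAdditive (a : MulAut P)).toAddMonoidHom.toZModLinearMap n
      map_one' := rfl
      map_mul' _ _ := rfl }
  obtain ⟨V₁, V₂, hV₁, hV₂, hρV₁, hρV₂, hcompl⟩ :=
    ρ.exists_isCompl_mem_invtSubmodule_ne_bot (p := p) (q := q) (π := π.toZModLinearMap n)
      (by rintro _ ⟨y, rfl⟩; exact hfix y)
      (fun x hx ↦ (hmaps x hx).imp fun y hy ↦ hy.symm)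
      (fun h ↦ (h hw).elim hwq)
      ((Submodule.ne_bot_iff _).2 ⟨q • v, ⟨v, rfl⟩, hv⟩)
  let E : Submodule (ZMod n) (Additive P) ≃o Subgroup P :=
    (AddSubgroup.toZModSubmodule n).symm.trans Subgroup.toAddSubgroup.symm
  have hEcompl := E.isCompl_iff.1 hcompl
  refine ⟨E V₁, E V₂, ?_, ?_, fun a ha x hx ↦ (ρ.mem_invtSubmodule.1 hρV₁ ⟨a, ha⟩) hx,
    fun a ha x hx ↦ (ρ.mem_invtSubmodule.1 hρV₂ ⟨a, ha⟩) hx, hEcompl.inf_eq_bot,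
    hEcompl.sup_eq_top⟩ <;>
    rwa [Ne, ← E.map_bot, E.apply_eq_iff_eq]

namespace ZMod

lemma natCast_pow_eq_zero_iff {p : ℕ} (hp : 1 < p) (a b : ℕ) :
    (p : ZMod (p ^ b)) ^ a = 0 ↔ b ≤ a := by
  rw [← Nat.cast_pow, natCast_eq_zero_iff, Nat.pow_dvd_pow_iff_le_right hp]

lemma exists_pow_pred_nsmul_eq_of_nsmul_eq_zero {p m : ℕ} (hp : 0 < p) {x : ZMod (p ^ m)}
    (hx : p • x = 0) : ∃ c : ZMod (p ^ m), p ^ (m - 1) • c = x := by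
  rcases Nat.eq_zero_or_pos m with rfl | hm
  · exact ⟨x, one_nsmul x⟩
  have : NeZero (p ^ m) := ⟨by positivity⟩
  obtain ⟨d, hd⟩ : p ^ (m - 1) ∣ x.val := by
    refine Nat.dvd_of_mul_dvd_mul_left hp ?_
    rw [← pow_succ', Nat.sub_add_cancel hm, ← natCast_eq_zero_iff]
    simpa [nsmul_eq_mul] using hx
  exact ⟨d, by rw [nsmul_eq_mul, ← Nat.cast_mul, ← hd, natCast_zmod_val]⟩

end ZMod

section PiZMod

variable {V ι : Type*} [AddCommGroup V] {p : ℕ} {e : ι → ℕ}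

lemma exists_addMonoidHom_fix_pow_pred_nsmul (ψ : V ≃+ ∀ i, ZMod (p ^ e i)) {m : ℕ}
    (hp : 1 < p) (hm : ∀ i, e i ≤ m) :
    ∃ π : V →+ V, (∀ x, π (p ^ (m - 1) • x) = p ^ (m - 1) • x) ∧
      ∀ x, p • x = 0 → ∃ y, π x = p ^ (m - 1) • y := by
  classical
  let π₀ : (∀ i, ZMod (p ^ e i)) →+ (∀ i, ZMod (p ^ e i)) :=
    AddMonoidHom.mk' (fun x i ↦ if e i = m then x i else 0) fun x y ↦ by
      ext i; by_cases h : e i = m <;> simp [h]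
  have hfix₀ (y : ∀ i, ZMod (p ^ e i)) : π₀ (p ^ (m - 1) • y) = p ^ (m - 1) • y := by
    ext i
    by_cases h : e i = m
    · simp [π₀, h]
    · have : (p : ZMod (p ^ e i)) ^ (m - 1) = 0 :=
        (ZMod.natCast_pow_eq_zero_iff hp _ _).2 (by have := hm i; omega)
      simp [π₀, h, nsmul_eq_mul, this]
  have hmaps₀ (y : ∀ i, ZMod (p ^ e i)) (hy : p • y = 0) : ∃ z, π₀ y = p ^ (m - 1) • z := by
    have key : ∀ i, ∃ c : ZMod (p ^ e i), π₀ y i = p ^ (m - 1) • c := by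
      intro i
      by_cases h : e i = m
      · obtain ⟨c, hc⟩ := ZMod.exists_pow_pred_nsmul_eq_of_nsmul_eq_zero (by omega) (congrFun hy i)
        exact ⟨c, by rw [AddMonoidHom.mk'_apply, if_pos h, ← hc, ← h]⟩
      · exact ⟨0, by simp [π₀, h]⟩
    choose c hc using key
    exact ⟨c, funext hc⟩
  refine ⟨ψ.symm.toAddMonoidHom.comp (π₀.comp ψ.toAddMonoidHom), fun x ↦ ?_, fun x hx ↦ ?_⟩
  · change ψ.symm (π₀ (ψ _)) = _
    rw [map_nsmul, hfix₀, ← map_nsmul, ψ.symm_apply_apply]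
  · obtain ⟨z, hz⟩ := hmaps₀ (ψ x) (by rw [← map_nsmul, hx, map_zero])
    exact ⟨ψ.symm z, by change ψ.symm (π₀ (ψ x)) = _; rw [hz, map_nsmul]⟩

variable [DecidableEq ι]

lemma exists_nsmul_eq_zero_forall_pow_pred_nsmul_ne (ψ : V ≃+ ∀ i, ZMod (p ^ e i)) {m : ℕ}
    {i : ι} (hp : 1 < p) (hi : 0 < e i) (him : e i < m) :
    ∃ w : V, p • w = 0 ∧ ∀ y, p ^ (m - 1) • y ≠ w := by
  refine ⟨ψ.symm (Pi.single i ((p : ZMod (p ^ e i)) ^ (e i - 1))), ?_, fun y hy ↦ ?_⟩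
  · rw [← map_nsmul, ← Pi.single_smul, nsmul_eq_mul, ← pow_succ', Nat.sub_add_cancel hi,
      (ZMod.natCast_pow_eq_zero_iff hp _ _).2 le_rfl, Pi.single_zero, map_zero]
  · have := congrFun (congrArg ψ hy) i
    rw [map_nsmul, ψ.apply_symm_apply, Pi.single_eq_same, Pi.smul_apply, nsmul_eq_mul,
      Nat.cast_pow, (ZMod.natCast_pow_eq_zero_iff hp _ _).2 (by omega), zero_mul, eq_comm,
      ZMod.natCast_pow_eq_zero_iff hp] at this
    omega

lemma exists_pow_pred_nsmul_ne_zero (ψ : V ≃+ ∀ i, ZMod (p ^ e i)) {i : ι} (hp : 1 < p)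
    (hi : 0 < e i) : ∃ v : V, p ^ (e i - 1) • v ≠ 0 := by
  refine ⟨ψ.symm (Pi.single i 1), fun h ↦ ?_⟩
  have := congrFun (congrArg ψ h) i
  rw [map_nsmul, ψ.apply_symm_apply, Pi.smul_apply, Pi.single_eq_same, nsmul_eq_mul, mul_one,
    Nat.cast_pow, map_zero, Pi.zero_apply, ZMod.natCast_pow_eq_zero_iff hp] at this
  omega

end PiZMod

lemma IsPGroup.exists_addEquiv_pi_zmod_pow {p : ℕ} [hp : Fact p.Prime] {P : Type*} [CommGroup P]
    [Finite P] (hP : IsPGroup p P) :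
    ∃ (ι : Type) (_ : Fintype ι) (e : ι → ℕ),
      (∀ i, 0 < e i) ∧ Nonempty (Additive P ≃+ ∀ i, ZMod (p ^ e i)) := by
  obtain ⟨ι, _, n, hn, ⟨ψ⟩⟩ := AddCommGroup.equiv_directSum_zmod_of_finite' (Additive P)
  obtain ⟨N, hN⟩ := hP.exists_card_eq
  have hcard : ∏ i, n i = p ^ N := by
    rw [← hN, Nat.card_congr (Additive.ofMul (α := P)),
      Nat.card_congr (ψ.trans (DirectSum.addEquivProd _)).toEquiv, Nat.card_pi]
    simp_rw [Nat.card_zmod]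
  have key : ∀ i, ∃ e, 0 < e ∧ n i = p ^ e := fun i ↦ by
    obtain ⟨e, -, he⟩ := (Nat.dvd_prime_pow hp.out).1 (hcard ▸ Finset.dvd_prod_of_mem n
      (Finset.mem_univ i))
    refine ⟨e, Nat.pos_of_ne_zero fun h ↦ ?_, he⟩
    exact (hn i).ne' (by rw [he, h, pow_zero])
  choose e he hne using key
  exact ⟨ι, inferInstance, e, he, ⟨(ψ.trans (DirectSum.addEquivProd _)).trans
    (AddEquiv.piCongrRight fun i ↦ (ZMod.ringEquivCongr (hne i)).toAddEquiv)⟩⟩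

lemma nonempty_mulEquiv_fin_pi_zmod_of_forall_eq {P : Type*} [CommGroup P] {ι : Type*}
    [Fintype ι] {p k : ℕ} {e : ι → ℕ} (ψ : Additive P ≃+ ∀ i, ZMod (p ^ e i))
    (he : ∀ i, e i = k) :
    Nonempty (P ≃* (Fin (Fintype.card ι) → Multiplicative (ZMod (p ^ k)))) :=
  ⟨(AddEquiv.toMultiplicativeRight (ψ.trans <|
    (AddEquiv.piCongrRight fun i ↦ (ZMod.ringEquivCongr (by rw [he i])).toAddEquiv).trans
      (AddEquiv.arrowCongr (Fintype.equivFin ι) (AddEquiv.refl _)))).trans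
    (MulEquiv.piMultiplicative _)⟩

lemma Finite.exists_forall_eq_or_exists_lt_max {ι : Type*} [Finite ι] (e : ι → ℕ) :
    (∃ k, ∀ i, e i = k) ∨ ∃ i j, e i < e j ∧ ∀ i', e i' ≤ e j := by
  rcases isEmpty_or_nonempty ι with h | h
  · exact Or.inl ⟨0, h.elim⟩
  obtain ⟨j, hj⟩ := Finite.exists_max e
  by_cases hall : ∀ i, e i = e j
  · exact Or.inl ⟨_, hall⟩
  obtain ⟨i, hi⟩ := not_forall.1 hall
  exact Or.inr ⟨i, j, (hj i).lt_of_ne hi, hj⟩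

/-- If a p'-group A of automorphisms acts indecomposably on a
finite abelian p-group P (no nontrivial A-invariant direct decomposition), then
P is homocyclic. -/
theorem stmt19 (p : ℕ) [Fact p.Prime] (P : Type*) [CommGroup P] [Fintype P]
    (hp : IsPGroup p P) (A : Subgroup (MulAut P))
    (hA : Nat.Coprime (Nat.card A) p)
    (hind : ¬ ∃ P₁ P₂ : Subgroup P, P₁ ≠ ⊥ ∧ P₂ ≠ ⊥ ∧
      (∀ a ∈ A, ∀ x ∈ P₁, a x ∈ P₁) ∧ (∀ a ∈ A, ∀ x ∈ P₂, a x ∈ P₂) ∧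
      P₁ ⊓ P₂ = ⊥ ∧ P₁ ⊔ P₂ = ⊤) :
    ∃ (k r : ℕ), Nonempty (P ≃* (Fin r → Multiplicative (ZMod (p ^ k)))) := by
  classical
  obtain ⟨ι, _, e, he, ⟨ψ⟩⟩ := hp.exists_addEquiv_pi_zmod_pow
  rcases Finite.exists_forall_eq_or_exists_lt_max e with ⟨k, hk⟩ | ⟨i, j, hij, hj⟩
  · exact ⟨k, _, nonempty_mulEquiv_fin_pi_zmod_of_forall_eq ψ hk⟩
  have hp1 : 1 < p := (Fact.out : p.Prime).one_lt
  obtain ⟨N, hN⟩ := hp.exists_card_eq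
  -- scalars in which `|A|` is invertible
  let : Module (ZMod (p ^ N)) (Additive P) :=
    AddCommGroup.zmodModule fun x ↦ hN ▸ (card_nsmul_eq_zero' : Nat.card (Additive P) • x = 0)
  obtain ⟨π, hfix, hmaps⟩ := exists_addMonoidHom_fix_pow_pred_nsmul ψ hp1 hj
  obtain ⟨w, hw, hwq⟩ := exists_nsmul_eq_zero_forall_pow_pred_nsmul_ne ψ hp1 (he i) hij
  obtain ⟨v, hv⟩ := exists_pow_pred_nsmul_ne_zero ψ hp1 (he j)
  exact absurd
    (exists_invariant_complementary_subgroups A (hA.pow_right N) π hfix hmaps hw hwq hv) hind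
end
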